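/- arXiv:1610.08595 — 11 statements merged into one kernel-verified Lean document; each statement's English description precedes it below -/
import Mathlib

section
/- Let n ≥ 1. For every tournament T on n vertices there exist a positive integer k with k ≤ n + 1 and a set of n dice, each with k sides, that realizes T. Concretely: there exist k ≤ n + 1 and a function X : Fin n → Fin k → ℕ such that for all distinct i, j in Fin n, T has an edge from i to j if and only if the number of pairs (a, b) ∈ Fin k × Fin k with X i a > X j b is strictly greater than k²/2. -/
/-!
Put face `a` of die `i` at `B * a + r a i`, where `r a` is an injective ranking of the
vertices with values below `B`. Comparing two faces then comes down to comparing their indices,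
and only when the indices agree does it depend on the ranking. So die `i` beats die `j` exactly
when `i` is above `j` in a strict majority of the `k` rankings. This reduces the theorem to
McGarvey's problem: write `T` as the majority relation of at most `n + 1` rankings.

That goes by induction, adding two vertices `u → v` at a time and two rankings; with an odd
number of injective rankings no pair ties, so one orientation of each pair decides it. In the old
rankings, `u` goes to the top in `m` of them and to the bottom in the other `m + 1`, and `v`
goes the other way. In the two new rankings, the old vertices appear in mutually reversed
orders, so every old pair keeps its majority. The positions of `u` and `v` in them are chosen
so that each pair involving `u` or `v` comes out the way `T` says.
-/

/-- The number of face wins of die `D` over die `E`: the number of pairs `(a, b)`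
of faces with `D a > E b`. -/
def faceWins (k : ℕ) (D E : Fin k → ℕ) : ℕ :=
  (Finset.univ.filter (fun p : Fin k × Fin k => D p.1 > E p.2)).card

open Finset Function Classical

noncomputable section

namespace DiceTournament

variable {V : Type*}

theorem mul_add_lt_mul_add_iff {B a b c d : ℕ} (hc : c < B) (hd : d < B) :
    B * a + c < B * b + d ↔ a < b ∨ a = b ∧ c < d := by
  constructor
  · intro h
    rcases lt_trichotomy a b with hab | rfl | hba
    · exact Or.inl hab
    · exact Or.inr ⟨rfl, by omega⟩
    · have := Nat.mul_le_mul_left B (Nat.succ_le_of_lt hba)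
      rw [Nat.mul_succ] at this
      omega
  · rintro (hab | ⟨rfl, hcd⟩)
    · have := Nat.mul_le_mul_left B (Nat.succ_le_of_lt hab)
      rw [Nat.mul_succ] at this
      omega
    · omega

def votes {k : ℕ} (r : Fin k → V → ℕ) (i j : V) : ℕ := #{ℓ | r ℓ j < r ℓ i}

theorem votes_cons {k : ℕ} (π : V → ℕ) (r : Fin k → V → ℕ) (i j : V) :
    votes (Fin.cons π r : Fin (k + 1) → V → ℕ) i j =
      (if π j < π i then 1 else 0) + votes r i j := by
  simp only [votes, card_filter, Fin.sum_univ_succ, Fin.cons_zero, Fin.cons_succ]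

theorem votes_add_votes_swap {k : ℕ} {r : Fin k → V → ℕ} (hr : ∀ ℓ, Injective (r ℓ))
    {i j : V} (hij : i ≠ j) : votes r i j + votes r j i = k := by
  have hswap : ∀ ℓ, r ℓ i < r ℓ j ↔ ¬ r ℓ j < r ℓ i := fun ℓ => by
    have := (hr ℓ).ne hij
    omega
  simp only [votes, hswap]
  rw [card_filter_add_card_filter_not, card_univ, Fintype.card_fin]

theorem exists_forall_lt [Finite V] {k : ℕ} (r : Fin k → V → ℕ) : ∃ B, ∀ ℓ x, r ℓ x < B := by
  obtain ⟨M, hM⟩ := Finite.bddAbove_range (fun p : Fin k × V => r p.1 p.2)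
  exact ⟨M + 1, fun ℓ x => Nat.lt_succ_of_le (hM ⟨(ℓ, x), rfl⟩)⟩

theorem two_mul_faceWins_add {k B : ℕ} (r : Fin k → V → ℕ) (hB : ∀ ℓ x, r ℓ x < B) (i j : V) :
    2 * faceWins k (fun a => B * a + r a i) (fun a => B * a + r a j) + k =
      k ^ 2 + 2 * votes r i j := by
  have hrow : ∀ a : Fin k, #{b : Fin k | B * b + r b j < B * a + r a i} =
      a + if r a j < r a i then 1 else 0 := by
    intro a
    have hsplit : ∀ b : Fin k, B * b + r b j < B * a + r a i ↔
        b < a ∨ b = a ∧ r a j < r a i := fun b => by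
      rw [mul_add_lt_mul_add_iff (hB b j) (hB a i), Fin.val_eq_val, Fin.lt_def]
      constructor <;> rintro (h | ⟨rfl, h⟩) <;> simp_all
    simp only [hsplit]
    by_cases hp : r a j < r a i
    · simp only [hp, and_true, if_true, ← Fin.card_Iic]
      congr 1
      ext b
      simp [le_iff_lt_or_eq]
    · simp only [hp, and_false, or_false, if_false, add_zero, ← Fin.card_Iio]
      congr 1
      ext b
      simp
  have hgauss : (∑ a : Fin k, (a : ℕ)) * 2 + k = k ^ 2 := by
    rw [Fin.sum_univ_eq_sum_range (fun a => a), sum_range_id_mul_two]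
    cases k <;> simp [sq, Nat.mul_succ]
  have hwins : faceWins k (fun a => B * a + r a i) (fun a => B * a + r a j) =
      ∑ a : Fin k, #{b : Fin k | B * b + r b j < B * a + r a i} := by
    rw [faceWins, card_filter, Fintype.sum_prod_type]
    simp only [gt_iff_lt, card_filter]
  rw [hwins, sum_congr rfl (fun a _ => hrow a), sum_add_distrib, votes, card_filter]
  omega

def MajorityRealizesOn (T : V → V → Prop) (S : Finset V) {k : ℕ} (r : Fin k → V → ℕ) : Prop :=
  ∀ i ∈ S, ∀ j ∈ S, i ≠ j → (T i j ↔ k < 2 * votes r i j)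

theorem iff_lt_two_mul_votes_swap {T : V → V → Prop}
    (htot : ∀ i j, i ≠ j → (T i j ↔ ¬ T j i)) {m : ℕ} {r : Fin (2 * m + 1) → V → ℕ}
    (hr : ∀ ℓ, Injective (r ℓ)) {i j : V} (hij : i ≠ j)
    (h : T i j ↔ 2 * m + 1 < 2 * votes r i j) : T j i ↔ 2 * m + 1 < 2 * votes r j i := by
  have := votes_add_votes_swap hr hij
  rw [htot j i hij.symm, h]
  omega

def blockRank (B : ℕ) (block key : V → ℕ) (x : V) : ℕ := B * block x + key x

theorem blockRank_lt_blockRank_iff {B : ℕ} {block key : V → ℕ} (hkey : ∀ x, key x < B)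
    {x y : V} : blockRank B block key x < blockRank B block key y ↔
      block x < block y ∨ block x = block y ∧ key x < key y :=
  mul_add_lt_mul_add_iff (hkey x) (hkey y)

theorem blockRank_injective {B : ℕ} {block key : V → ℕ} (hkey : ∀ x, key x < B)
    (hinj : Injective key) : Injective (blockRank B block key) := by
  intro x y h
  have hxy := mt (blockRank_lt_blockRank_iff hkey).2 h.not_lt
  have hyx := mt (blockRank_lt_blockRank_iff hkey).2 h.symm.not_lt
  exact hinj (by omega)

theorem card_filter_val_lt_half (m : ℕ) : #{ℓ : Fin (2 * m + 1) | ↑ℓ < m} = m := by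
  rw [Fin.card_filter_val_lt]
  omega

theorem card_filter_not_val_lt_half (m : ℕ) : #{ℓ : Fin (2 * m + 1) | ¬ ↑ℓ < m} = m + 1 := by
  have h := card_filter_add_card_filter_not (s := univ) (fun ℓ : Fin (2 * m + 1) => ↑ℓ < m)
  rw [card_filter_val_lt_half, card_univ, Fintype.card_fin] at h
  omega

section LiftedRank

variable (u v : V)

def liftedRank (m : ℕ) (ℓ : Fin (2 * m + 1)) (B : ℕ) (r : V → ℕ) : V → ℕ :=
  blockRank B (fun x => if x = u then (if ℓ < m then 2 else 0)
    else if x = v then (if ℓ < m then 0 else 2) else 1) r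

variable {u v} {m B : ℕ} {r : Fin (2 * m + 1) → V → ℕ}

theorem votes_liftedRank (hB : ∀ ℓ x, r ℓ x < B) {x y : V} (hxu : x ≠ u) (hxv : x ≠ v)
    (hyu : y ≠ u) (hyv : y ≠ v) :
    votes (fun ℓ => liftedRank u v m ℓ B (r ℓ)) x y = votes r x y := by
  simp only [votes, liftedRank, blockRank_lt_blockRank_iff (hB _), hxu, hxv, hyu, hyv, if_false,
    lt_irrefl, true_and, false_or]

theorem votes_liftedRank_u (hB : ∀ ℓ x, r ℓ x < B) {x : V} (hxu : x ≠ u) (hxv : x ≠ v) :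
    votes (fun ℓ => liftedRank u v m ℓ B (r ℓ)) u x = m := by
  simp only [votes, liftedRank, blockRank_lt_blockRank_iff (hB _), hxu, hxv, if_true, if_false]
  refine (congrArg card (filter_congr fun ℓ _ => ?_)).trans (card_filter_val_lt_half m)
  split_ifs <;> simp_all

theorem votes_liftedRank_v (hB : ∀ ℓ x, r ℓ x < B) (hvu : v ≠ u) {x : V} (hxu : x ≠ u)
    (hxv : x ≠ v) : votes (fun ℓ => liftedRank u v m ℓ B (r ℓ)) v x = m + 1 := by
  simp only [votes, liftedRank, blockRank_lt_blockRank_iff (hB _), hvu, hxu, hxv, if_true,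
    if_false]
  refine (congrArg card (filter_congr fun ℓ _ => ?_)).trans (card_filter_not_val_lt_half m)
  split_ifs <;> simp_all

theorem votes_liftedRank_u_v (hB : ∀ ℓ x, r ℓ x < B) (hvu : v ≠ u) :
    votes (fun ℓ => liftedRank u v m ℓ B (r ℓ)) u v = m := by
  simp only [votes, liftedRank, blockRank_lt_blockRank_iff (hB _), hvu, if_true, if_false]
  refine (congrArg card (filter_congr fun ℓ _ => ?_)).trans (card_filter_val_lt_half m)
  split_ifs <;> simp_all

end LiftedRank

section InsertPair

variable [Fintype V] (T : V → V → Prop) (u v : V)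

theorem equivFin_lt_card (x : V) : (Fintype.equivFin V x : ℕ) < Fintype.card V :=
  (Fintype.equivFin V x).isLt

theorem card_sub_one_sub_equivFin_lt_card (x : V) :
    Fintype.card V - 1 - Fintype.equivFin V x < Fintype.card V := by
  have := equivFin_lt_card x
  omega

/- From bottom to top, `firstRank` lists the old vertices `x` with
`(T v x, ¬ T u x)`, `(T v x, T u x)`, then `v`, then `(¬ T v x, T u x)`, then `u`, then
`(¬ T v x, ¬ T u x)`. `secondRank` lists the old vertices in the reverse order, with `v` at
the bottom and `u` just below the block `(T v x, ¬ T u x)`, which is now on top. So `u` is above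
`x` in both exactly when `T u x`, and `v` is above `x` in one of them exactly when `T v x`. -/
def pairBlock (x : V) : ℕ :=
  if T v x then (if T u x then 3 else 1) else (if T u x then 5 else 7)

def firstRank : V → ℕ :=
  blockRank (Fintype.card V)
    (fun x => if x = u then 6 else if x = v then 4 else pairBlock T u v x)
    (fun x => Fintype.equivFin V x)

def secondRank : V → ℕ :=
  blockRank (Fintype.card V)
    (fun x => if x = u then 6 else if x = v then 0 else 8 - pairBlock T u v x)
    (fun x => Fintype.card V - 1 - Fintype.equivFin V x)

def insertPairProfile {m : ℕ} (r : Fin (2 * m + 1) → V → ℕ) (B : ℕ) :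
    Fin (2 * (m + 1) + 1) → V → ℕ :=
  Fin.cons (firstRank T u v) (Fin.cons (secondRank T u v) (fun ℓ => liftedRank u v m ℓ B (r ℓ)))

theorem firstRank_injective : Injective (firstRank T u v) := by
  unfold firstRank
  exact blockRank_injective equivFin_lt_card
    (Fin.val_injective.comp (Fintype.equivFin V).injective)

theorem secondRank_injective : Injective (secondRank T u v) := by
  unfold secondRank
  refine blockRank_injective card_sub_one_sub_equivFin_lt_card fun x y h => ?_
  have := equivFin_lt_card x
  have := equivFin_lt_card y
  exact (Fintype.equivFin V).injective (Fin.ext (by omega))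

theorem insertPairProfile_injective {m B : ℕ} {r : Fin (2 * m + 1) → V → ℕ}
    (hr : ∀ ℓ, Injective (r ℓ)) (hB : ∀ ℓ x, r ℓ x < B) (ℓ : Fin (2 * (m + 1) + 1)) :
    Injective (insertPairProfile T u v r B ℓ) := by
  refine Fin.cases ?_ (fun ℓ => Fin.cases ?_ (fun ℓ => ?_) ℓ) ℓ
  · exact firstRank_injective T u v
  · exact secondRank_injective T u v
  · exact blockRank_injective (hB ℓ) (hr ℓ)

theorem votes_insertPairProfile {m B : ℕ} (r : Fin (2 * m + 1) → V → ℕ) (i j : V) :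
    votes (insertPairProfile T u v r B) i j =
      (if firstRank T u v j < firstRank T u v i then 1 else 0) +
      (if secondRank T u v j < secondRank T u v i then 1 else 0) +
      votes (fun ℓ => liftedRank u v m ℓ B (r ℓ)) i j := by
  rw [insertPairProfile, votes_cons, votes_cons, add_assoc]
  rfl

variable {T u v}

theorem firstRank_lt_firstRank_u {x : V} (hxu : x ≠ u) (hxv : x ≠ v) :
    firstRank T u v x < firstRank T u v u ↔ T u x ∨ T v x := by
  rw [firstRank, blockRank_lt_blockRank_iff equivFin_lt_card]
  simp only [pairBlock, hxu, hxv, if_true, if_false]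
  split_ifs <;> simp_all

theorem secondRank_lt_secondRank_u {x : V} (hxu : x ≠ u) (hxv : x ≠ v) :
    secondRank T u v x < secondRank T u v u ↔ T u x ∨ ¬ T v x := by
  rw [secondRank, blockRank_lt_blockRank_iff card_sub_one_sub_equivFin_lt_card]
  simp only [pairBlock, hxu, hxv, if_true, if_false]
  split_ifs <;> simp_all

theorem firstRank_lt_firstRank_v {x : V} (hxu : x ≠ u) (hxv : x ≠ v) :
    firstRank T u v x < firstRank T u v v ↔ T v x := by
  rw [firstRank, blockRank_lt_blockRank_iff equivFin_lt_card]
  simp only [pairBlock, hxu, hxv, if_true, if_false]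
  split_ifs <;> simp_all

theorem secondRank_v_lt_secondRank {x : V} (hvu : v ≠ u) (hxv : x ≠ v) :
    secondRank T u v v < secondRank T u v x := by
  rw [secondRank, blockRank_lt_blockRank_iff card_sub_one_sub_equivFin_lt_card]
  simp only [pairBlock, hvu, hxv, if_true, if_false]
  split_ifs <;> simp_all

theorem firstRank_v_lt_firstRank_u (hvu : v ≠ u) : firstRank T u v v < firstRank T u v u := by
  rw [firstRank, blockRank_lt_blockRank_iff equivFin_lt_card]
  simp [hvu]

theorem secondRank_lt_secondRank_iff {x y : V} (hxu : x ≠ u) (hxv : x ≠ v) (hyu : y ≠ u)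
    (hyv : y ≠ v) :
    secondRank T u v x < secondRank T u v y ↔ firstRank T u v y < firstRank T u v x := by
  rw [secondRank, firstRank, blockRank_lt_blockRank_iff card_sub_one_sub_equivFin_lt_card,
    blockRank_lt_blockRank_iff equivFin_lt_card]
  simp only [pairBlock, hxu, hxv, hyu, hyv, if_false]
  have := equivFin_lt_card x
  have := equivFin_lt_card y
  split_ifs <;> omega

variable {m B : ℕ} {r : Fin (2 * m + 1) → V → ℕ}

theorem votes_insertPairProfile_of_ne (hB : ∀ ℓ x, r ℓ x < B) {x y : V} (hxu : x ≠ u)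
    (hxv : x ≠ v) (hyu : y ≠ u) (hyv : y ≠ v) (hxy : x ≠ y) :
    votes (insertPairProfile T u v r B) x y = votes r x y + 1 := by
  rw [votes_insertPairProfile, votes_liftedRank hB hxu hxv hyu hyv]
  simp only [secondRank_lt_secondRank_iff hyu hyv hxu hxv]
  have := (firstRank_injective T u v).ne hxy
  split_ifs <;> omega

theorem votes_insertPairProfile_u (hB : ∀ ℓ x, r ℓ x < B) {x : V} (hxu : x ≠ u) (hxv : x ≠ v) :
    votes (insertPairProfile T u v r B) u x = m + 1 + if T u x then 1 else 0 := by
  rw [votes_insertPairProfile, votes_liftedRank_u hB hxu hxv]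
  simp only [firstRank_lt_firstRank_u hxu hxv, secondRank_lt_secondRank_u hxu hxv]
  by_cases hux : T u x <;> by_cases hvx : T v x <;> simp [hux, hvx] <;> omega

theorem votes_insertPairProfile_v (hB : ∀ ℓ x, r ℓ x < B) (hvu : v ≠ u) {x : V} (hxu : x ≠ u)
    (hxv : x ≠ v) :
    votes (insertPairProfile T u v r B) v x = m + 1 + if T v x then 1 else 0 := by
  rw [votes_insertPairProfile, votes_liftedRank_v hB hvu hxu hxv,
    if_neg (not_lt_of_gt (secondRank_v_lt_secondRank (T := T) hvu hxv))]
  simp only [firstRank_lt_firstRank_v hxu hxv]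
  omega

theorem votes_insertPairProfile_u_v (hB : ∀ ℓ x, r ℓ x < B) (hvu : v ≠ u) :
    votes (insertPairProfile T u v r B) u v = m + 2 := by
  rw [votes_insertPairProfile, votes_liftedRank_u_v hB hvu,
    if_pos (firstRank_v_lt_firstRank_u hvu), if_pos (secondRank_v_lt_secondRank hvu hvu.symm)]
  omega

theorem MajorityRealizesOn.insertPair (htot : ∀ i j, i ≠ j → (T i j ↔ ¬ T j i)) {S : Finset V}
    (hu : u ∉ S) (hv : v ∉ S) (hvu : v ≠ u) (hTuv : T u v) (hr : ∀ ℓ, Injective (r ℓ))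
    (hB : ∀ ℓ x, r ℓ x < B) (hS : MajorityRealizesOn T S r) :
    MajorityRealizesOn T (insert u (insert v S)) (insertPairProfile T u v r B) := by
  have hP := insertPairProfile_injective T u v hr hB
  have hne : ∀ x ∈ S, x ≠ u ∧ x ≠ v := fun x hx =>
    ⟨ne_of_mem_of_not_mem hx hu, ne_of_mem_of_not_mem hx hv⟩
  have hold : ∀ x ∈ S, ∀ y ∈ S, x ≠ y →
      (T x y ↔ 2 * (m + 1) + 1 < 2 * votes (insertPairProfile T u v r B) x y) := by
    intro x hx y hy hxy
    rw [votes_insertPairProfile_of_ne hB (hne x hx).1 (hne x hx).2 (hne y hy).1 (hne y hy).2 hxy,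
      hS x hx y hy hxy]
    omega
  have hux : ∀ x ∈ S, T u x ↔ 2 * (m + 1) + 1 < 2 * votes (insertPairProfile T u v r B) u x := by
    intro x hx
    rw [votes_insertPairProfile_u hB (hne x hx).1 (hne x hx).2]
    by_cases h : T u x
    · simp only [h, if_true, true_iff]
      omega
    · simp only [h, if_false, false_iff]
      omega
  have hvx : ∀ x ∈ S, T v x ↔ 2 * (m + 1) + 1 < 2 * votes (insertPairProfile T u v r B) v x := by
    intro x hx
    rw [votes_insertPairProfile_v hB hvu (hne x hx).1 (hne x hx).2]
    by_cases h : T v x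
    · simp only [h, if_true, true_iff]
      omega
    · simp only [h, if_false, false_iff]
      omega
  have huv : T u v ↔ 2 * (m + 1) + 1 < 2 * votes (insertPairProfile T u v r B) u v :=
    iff_of_true hTuv (by rw [votes_insertPairProfile_u_v hB hvu]; omega)
  intro i hi j hj hij
  rw [mem_insert, mem_insert] at hi hj
  rcases hi with rfl | rfl | hi <;> rcases hj with rfl | rfl | hj
  · exact absurd rfl hij
  · exact huv
  · exact hux j hj
  · exact iff_lt_two_mul_votes_swap htot hP hvu.symm huv
  · exact absurd rfl hij
  · exact hvx j hj
  · exact iff_lt_two_mul_votes_swap htot hP (hne i hi).1.symm (hux i hi)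
  · exact iff_lt_two_mul_votes_swap htot hP (hne i hi).2.symm (hvx i hi)
  · exact hold i hi j hj hij

end InsertPair

theorem exists_majorityRealizesOn [Fintype V] {T : V → V → Prop}
    (htot : ∀ i j, i ≠ j → (T i j ↔ ¬ T j i)) (S : Finset V) :
    ∃ m, 2 * m ≤ #S ∧ ∃ r : Fin (2 * m + 1) → V → ℕ,
      (∀ ℓ, Injective (r ℓ)) ∧ MajorityRealizesOn T S r := by
  induction S using Finset.strongInduction with
  | H S ih =>
  by_cases hS : #S ≤ 1
  · refine ⟨0, by omega, fun _ x => Fintype.equivFin V x,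
      fun _ => Fin.val_injective.comp (Fintype.equivFin V).injective, ?_⟩
    intro i hi j hj hij
    exact absurd (card_le_one.mp hS i hi j hj) hij
  obtain ⟨a, ha, b, hb, hab⟩ := one_lt_card.mp (by omega : 1 < #S)
  obtain ⟨u, hu, v, hv, hvu, hTuv⟩ : ∃ u ∈ S, ∃ v ∈ S, v ≠ u ∧ T u v := by
    by_cases h : T a b
    · exact ⟨a, ha, b, hb, hab.symm, h⟩
    · exact ⟨b, hb, a, ha, hab, (htot b a hab.symm).mpr h⟩
  have hvS : v ∈ S.erase u := mem_erase.mpr ⟨hvu, hv⟩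
  obtain ⟨m, hm, r, hr, hreal⟩ :=
    ih ((S.erase u).erase v) ((erase_subset _ _).trans_ssubset (erase_ssubset hu))
  obtain ⟨B, hB⟩ := exists_forall_lt r
  have hcard := card_erase_add_one hvS
  rw [card_erase_of_mem hu] at hcard
  refine ⟨m + 1, by omega, insertPairProfile T u v r B, insertPairProfile_injective T u v hr hB, ?_⟩
  rw [← insert_erase hu, ← insert_erase hvS]
  exact hreal.insertPair htot (by simp) (by simp) hvu hTuv hr hB

end DiceTournament

end

theorem tournament_realized_by_dice_general (n : ℕ)
    (T : Fin n → Fin n → Prop)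
    (htot : ∀ i j : Fin n, i ≠ j → (T i j ↔ ¬ T j i)) :
    ∃ k : ℕ, 0 < k ∧ k ≤ n + 1 ∧ ∃ X : Fin n → Fin k → ℕ,
      ∀ i j : Fin n, i ≠ j → (T i j ↔ 2 * faceWins k (X i) (X j) > k ^ 2) := by
  obtain ⟨m, hm, r, -, hreal⟩ := DiceTournament.exists_majorityRealizesOn htot (univ : Finset (Fin n))
  obtain ⟨B, hB⟩ := DiceTournament.exists_forall_lt r
  rw [card_univ, Fintype.card_fin] at hm
  refine ⟨2 * m + 1, by omega, by omega, fun i a => B * a + r a i, fun i j hij => ?_⟩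
  have hwins := DiceTournament.two_mul_faceWins_add r hB i j
  rw [hreal i (mem_univ i) j (mem_univ j) hij]
  beta_reduce
  omega

/-- For every tournament `T` on `n ≥ 1` vertices there exist `0 < k ≤ n + 1` and a set of
`n` dice with `k` sides realizing `T`: `T i j` holds iff the number of face wins of die `i`
over die `j` exceeds `k²/2`. -/
theorem tournament_realized_by_dice (n : ℕ) (hn : 1 ≤ n)
    (T : Fin n → Fin n → Prop)
    (hirr : ∀ i, ¬ T i i)
    (htot : ∀ i j : Fin n, i ≠ j → (T i j ↔ ¬ T j i)) :
    ∃ k : ℕ, 0 < k ∧ k ≤ n + 1 ∧ ∃ X : Fin n → Fin k → ℕ,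
      ∀ i j : Fin n, i ≠ j → (T i j ↔ 2 * faceWins k (X i) (X j) > k ^ 2) :=
  tournament_realized_by_dice_general n T htot
end

section
/- Let n be an odd positive integer. For every tournament T on n vertices there exists a set of n dice, each with n sides (a function X : Fin n → Fin n → ℕ), that realizes T. -/
open Finset Function

section Rank

variable {ι β : Type*} [Fintype ι] [LinearOrder β]

def valueRank (f : ι → β) (x : ι) : ℕ := #{y | f y < f x}

theorem valueRank_lt_valueRank_iff (f : ι → β) {x y : ι} :
    valueRank f x < valueRank f y ↔ f x < f y := by
  constructor
  · intro h
    by_contra! hyx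
    exact h.not_ge (card_le_card (monotone_filter_right _ fun _ _ => (·.trans_le hyx)))
  · intro h
    refine card_lt_card ⟨monotone_filter_right _ fun _ _ => (·.trans h), fun hsub => ?_⟩
    simpa using hsub (mem_filter.2 ⟨mem_univ x, h⟩)

end Rank

section Profile

variable {V C β : Type*} [Fintype V] [LinearOrder β]

def IsTournament (T : C → C → Prop) : Prop := ∀ i j, i ≠ j → (T i j ↔ ¬ T j i)

def prefCount (σ : V → C → β) (i j : C) : ℕ := #{a | σ a j < σ a i}

def IsMajorityProfile (σ : V → C → β) (T : C → C → Prop) : Prop :=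
  ∀ i j, i ≠ j → (T i j ↔ Fintype.card V < 2 * prefCount σ i j)

theorem prefCount_add_prefCount_le (σ : V → C → β) (i j : C) :
    prefCount σ i j + prefCount σ j i ≤ Fintype.card V := by
  classical
  rw [prefCount, prefCount,
    ← card_union_of_disjoint (disjoint_filter.2 fun _ _ h h' => h.asymm h')]
  exact card_le_univ _

theorem IsMajorityProfile.of_forall_lt {σ : V → C → β} {T : C → C → Prop}
    (hT : IsTournament T)
    (h : ∀ i j, i ≠ j → T i j → Fintype.card V < 2 * prefCount σ i j) :
    IsMajorityProfile σ T := by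
  refine fun i j hij => ⟨h i j hij, fun hlt => by_contra fun hTij => ?_⟩
  have hji := h j i hij.symm (by_contra fun hTji => hTij ((hT i j hij).2 hTji))
  have := prefCount_add_prefCount_le σ i j
  omega

theorem IsMajorityProfile.valueRank [Fintype C] {σ : V → C → β} {T : C → C → Prop}
    (h : IsMajorityProfile σ T) : IsMajorityProfile (fun a => valueRank (σ a)) T := by
  simpa only [IsMajorityProfile, prefCount, valueRank_lt_valueRank_iff] using h

theorem IsMajorityProfile.comp_equiv {V' C' : Type*} [Fintype V'] {σ : V → C → β}
    {T : C → C → Prop} (h : IsMajorityProfile σ T) (eV : V' ≃ V) (eC : C' ≃ C) :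
    IsMajorityProfile (fun a c => σ (eV a) (eC c)) (fun x y => T (eC x) (eC y)) := by
  intro i j hij
  have hcount : prefCount (fun a c => σ (eV a) (eC c)) i j = prefCount σ (eC i) (eC j) :=
    card_equiv eV (by simp)
  rw [hcount, Fintype.card_congr eV]
  exact h _ _ (eC.injective.ne hij)

theorem prefCount_sum_fin_two (σ : V ⊕ Fin 2 → C → β) (i j : C) :
    prefCount σ i j = prefCount (σ ∘ .inl) i j
      + (if σ (.inr 0) j < σ (.inr 0) i then 1 else 0)
      + (if σ (.inr 1) j < σ (.inr 1) i then 1 else 0) := by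
  simp only [prefCount, card_filter, Fintype.sum_sum_type, Fin.sum_univ_two, comp_apply]
  ring

end Profile

section FinCount

variable {n c : ℕ} {P : Fin n → Prop} [DecidablePred P]

theorem card_filter_fin_of_iff_lt (hc : c ≤ n) (h : ∀ a, P a ↔ (a : ℕ) < c) :
    #{a | P a} = c := by
  rw [filter_congr fun a _ => h a, Fin.card_filter_val_lt, min_eq_right hc]

theorem card_filter_fin_of_iff_le (hc : c ≤ n) (h : ∀ a, P a ↔ c ≤ (a : ℕ)) :
    #{a | P a} = n - c := by
  have := card_filter_add_card_filter_not (s := univ) fun a : Fin n => (a : ℕ) < c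
  rw [card_filter_fin_of_iff_lt hc fun _ => Iff.rfl, card_univ, Fintype.card_fin] at this
  rw [filter_congr fun a _ => (h a).trans not_lt.symm]
  omega

end FinCount

section Extension

variable {C : Type*} (m : ℕ) (T : C ⊕ Fin 2 → C ⊕ Fin 2 → Prop) [DecidableRel T]

def newVoterLevel (r : C) : ℤ :=
  if T (.inr 0) (.inl r) then (if T (.inr 1) (.inl r) then 2 else 0)
  else (if T (.inr 1) (.inl r) then 4 else 6)

/-- Here `u = .inr 0`, `v = .inr 1`, and the new voters are `A = .inr 0`, `B = .inr 1`. Voter `A`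
ranks the old candidates by `newVoterLevel`, breaking ties by `key`, with `u` between levels 2 and 4
and `v` between levels 4 and 6; voter `B` reverses `A` on old candidates, puts `u` on top and `v`
between levels 0 and 2 of `A`. -/
def extendedProfile (τ : Fin (2 * m + 1) → C → ℕ) (key : C → ℤ) :
    Fin (2 * m + 1) ⊕ Fin 2 → C ⊕ Fin 2 → ℤ ×ₗ ℤ
  | .inl a, .inl r => toLex (0, τ a r)
  | .inl a, .inr 0 =>
    if (a : ℕ) < m then toLex (1, 0)
    else toLex (-1, if (a : ℕ) = m ∧ T (.inr 0) (.inr 1) then 1 else 0)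
  | .inl a, .inr 1 =>
    if m < (a : ℕ) then toLex (1, 0)
    else toLex (-1, if (a : ℕ) = m ∧ T (.inr 1) (.inr 0) then 1 else 0)
  | .inr 0, .inl r => toLex (newVoterLevel T r, key r)
  | .inr 0, .inr 0 => toLex (3, 0)
  | .inr 0, .inr 1 => toLex (5, 0)
  | .inr 1, .inl r => toLex (-newVoterLevel T r, -key r)
  | .inr 1, .inr 0 => toLex (1, 0)
  | .inr 1, .inr 1 => toLex (-1, 0)

variable {m T} {τ : Fin (2 * m + 1) → C → ℕ} {key : C → ℤ}

theorem prefCount_extendedProfile_inl_inl (hkey : Injective key) {i j : C} (hij : i ≠ j) :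
    prefCount (extendedProfile m T τ key) (.inl i) (.inl j) = prefCount τ i j + 1 := by
  have hk := hkey.ne hij
  rw [prefCount_sum_fin_two]
  simp only [prefCount, comp_apply, extendedProfile,
    Prod.Lex.toLex_lt_toLex, Nat.cast_lt, lt_self_iff_false, false_or, true_and]
  split_ifs <;> omega

theorem prefCount_extendedProfile_inl_inr (hT : IsTournament T) {r : C} {b : Fin 2}
    (h : T (.inl r) (.inr b)) :
    prefCount (extendedProfile m T τ key) (.inl r) (.inr b) = m + 2 := by
  have hbr : ¬ T (.inr b) (.inl r) := (hT _ _ Sum.inl_ne_inr).1 h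
  rw [prefCount_sum_fin_two, prefCount]
  match b with
  | 0 =>
    rw [card_filter_fin_of_iff_le (c := m) (by omega) fun a => by
        simp only [comp_apply, extendedProfile]
        split_ifs <;> simp [Prod.Lex.toLex_lt_toLex] <;> omega]
    by_cases hvr : T (.inr 1) (.inl r) <;>
      simp [extendedProfile, newVoterLevel, hbr, hvr, Prod.Lex.toLex_lt_toLex] <;> omega
  | 1 =>
    rw [card_filter_fin_of_iff_lt (c := m + 1) (by omega) fun a => by
        simp only [comp_apply, extendedProfile]
        split_ifs <;> simp [Prod.Lex.toLex_lt_toLex] <;> omega]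
    by_cases hur : T (.inr 0) (.inl r) <;>
      simp [extendedProfile, newVoterLevel, hbr, hur, Prod.Lex.toLex_lt_toLex]

theorem prefCount_extendedProfile_inr_inl {r : C} {b : Fin 2} (h : T (.inr b) (.inl r)) :
    prefCount (extendedProfile m T τ key) (.inr b) (.inl r) = m + 2 := by
  rw [prefCount_sum_fin_two, prefCount]
  match b with
  | 0 =>
    rw [card_filter_fin_of_iff_lt (c := m) (by omega) fun a => by
        simp only [comp_apply, extendedProfile]
        split_ifs <;> simp [Prod.Lex.toLex_lt_toLex] <;> omega]
    by_cases hvr : T (.inr 1) (.inl r) <;>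
      simp [extendedProfile, newVoterLevel, h, hvr, Prod.Lex.toLex_lt_toLex]
  | 1 =>
    rw [card_filter_fin_of_iff_le (c := m + 1) (by omega) fun a => by
        simp only [comp_apply, extendedProfile]
        split_ifs <;> simp [Prod.Lex.toLex_lt_toLex] <;> omega]
    by_cases hur : T (.inr 0) (.inl r) <;>
      simp [extendedProfile, newVoterLevel, h, hur, Prod.Lex.toLex_lt_toLex] <;> omega

theorem prefCount_extendedProfile_inr_inr (hT : IsTournament T) {b c : Fin 2} (hbc : b ≠ c)
    (h : T (.inr b) (.inr c)) :
    prefCount (extendedProfile m T τ key) (.inr b) (.inr c) = m + 2 := by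
  have hcb : ¬ T (.inr c) (.inr b) := (hT _ _ (Sum.inr_injective.ne hbc)).1 h
  rw [prefCount_sum_fin_two, prefCount]
  match b, c with
  | 0, 1 =>
    rw [card_filter_fin_of_iff_lt (c := m + 1) (by omega) fun a => by
        simp only [comp_apply, extendedProfile, h, hcb, and_true, and_false, ↓reduceIte]
        split_ifs <;> simp [Prod.Lex.toLex_lt_toLex] <;> omega]
    simp [extendedProfile, Prod.Lex.toLex_lt_toLex]
  | 1, 0 =>
    rw [card_filter_fin_of_iff_le (c := m) (by omega) fun a => by
        simp only [comp_apply, extendedProfile, h, hcb, and_true, and_false, ↓reduceIte]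
        split_ifs <;> simp [Prod.Lex.toLex_lt_toLex] <;> omega]
    simp [extendedProfile, Prod.Lex.toLex_lt_toLex]
    omega
  | 0, 0 | 1, 1 => exact (hbc rfl).elim

theorem isMajorityProfile_extendedProfile (hT : IsTournament T)
    (hτ : IsMajorityProfile τ fun i j => T (.inl i) (.inl j)) (hkey : Injective key) :
    IsMajorityProfile (extendedProfile m T τ key) T := by
  refine .of_forall_lt hT fun x y hxy hTxy => ?_
  rw [Fintype.card_sum, Fintype.card_fin, Fintype.card_fin]
  match x, y with
  | .inl i, .inl j =>
    have hij : i ≠ j := fun h => hxy (congrArg Sum.inl h)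
    have hold := (hτ i j hij).1 hTxy
    rw [Fintype.card_fin] at hold
    rw [prefCount_extendedProfile_inl_inl hkey hij]
    omega
  | .inl r, .inr b => rw [prefCount_extendedProfile_inl_inr hT hTxy]; omega
  | .inr b, .inl r => rw [prefCount_extendedProfile_inr_inl hTxy]; omega
  | .inr b, .inr c =>
    rw [prefCount_extendedProfile_inr_inr hT (fun h => hxy (congrArg Sum.inr h)) hTxy]
    omega

end Extension

theorem exists_isMajorityProfile_of_odd (m : ℕ) (T : Fin (2 * m + 1) → Fin (2 * m + 1) → Prop)
    (hT : IsTournament T) :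
    ∃ σ : Fin (2 * m + 1) → Fin (2 * m + 1) → ℕ, IsMajorityProfile σ T := by
  induction m with
  | zero => exact ⟨fun _ _ => 0, fun i j hij => absurd (Fin.ext (by omega)) hij⟩
  | succ m ih =>
    classical
    let e : Fin (2 * m + 1) ⊕ Fin 2 ≃ Fin (2 * (m + 1) + 1) :=
      finSumFinEquiv.trans (finCongr (by ring))
    let T' : Fin (2 * m + 1) ⊕ Fin 2 → Fin (2 * m + 1) ⊕ Fin 2 → Prop :=
      fun x y => T (e x) (e y)
    have hT' : IsTournament T' := fun x y hxy => hT _ _ (e.injective.ne hxy)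
    obtain ⟨τ, hτ⟩ := ih (fun i j => T' (.inl i) (.inl j))
      fun i j hij => hT' _ _ (Sum.inl_injective.ne hij)
    have hkey : Injective fun r : Fin (2 * m + 1) => ((r : ℕ) : ℤ) :=
      Nat.cast_injective.comp Fin.val_injective
    have h := ((isMajorityProfile_extendedProfile hT' hτ hkey).comp_equiv e.symm e.symm).valueRank
    exact ⟨_, by simpa [T'] using h⟩

section Dice

variable {k : ℕ} {C β : Type*} [Fintype C] [LinearOrder β]

def profileDice (σ : Fin k → C → β) (i : C) (a : Fin k) : ℕ :=
  valueRank (fun p : C × Fin k => toLex (p.2, σ p.2 p.1)) (i, a)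

theorem faceWins_eq_sum (D E : Fin k → ℕ) : faceWins k D E = ∑ a, #{b | E b < D a} := by
  simp only [faceWins, card_filter, Fintype.sum_prod_type]

theorem card_profileDice_lt (σ : Fin k → C → β) (i j : C) (a : Fin k) :
    #{b | profileDice σ j b < profileDice σ i a} = a + if σ a j < σ a i then 1 else 0 := by
  simp only [profileDice, valueRank_lt_valueRank_iff, Prod.Lex.toLex_lt_toLex]
  split_ifs with h
  · rw [← Fin.card_Iic]
    congr 1
    ext b
    simp only [mem_filter, mem_univ, true_and, mem_Iic, le_iff_lt_or_eq]
    grind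
  · rw [← Fin.card_Iio]
    congr 1
    ext b
    simp only [mem_filter, mem_univ, true_and, mem_Iio]
    grind

theorem two_mul_sum_fin_val_add (k : ℕ) : 2 * ∑ a : Fin k, (a : ℕ) + k = k ^ 2 := by
  rw [Fin.sum_univ_eq_sum_range (fun i => i), mul_comm, Finset.sum_range_id_mul_two]
  cases k with
  | zero => rfl
  | succ k => simp only [add_tsub_cancel_right]; ring

theorem two_mul_faceWins_profileDice_add (σ : Fin k → C → β) (i j : C) :
    2 * faceWins k (profileDice σ i) (profileDice σ j) + k = k ^ 2 + 2 * prefCount σ i j := by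
  rw [faceWins_eq_sum]
  simp only [card_profileDice_lt, sum_add_distrib]
  simp only [prefCount, card_filter]
  have := two_mul_sum_fin_val_add k
  omega

end Dice

theorem tournament_realized_by_dice_odd_general (n : ℕ) (hodd : Odd n)
    (T : Fin n → Fin n → Prop)
    (htot : ∀ i j : Fin n, i ≠ j → (T i j ↔ ¬ T j i)) :
    ∃ X : Fin n → Fin n → ℕ,
      ∀ i j : Fin n, i ≠ j → (T i j ↔ 2 * faceWins n (X i) (X j) > n ^ 2) := by
  obtain ⟨m, rfl⟩ := hodd
  obtain ⟨σ, hσ⟩ := exists_isMajorityProfile_of_odd m T htot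
  refine ⟨profileDice σ, fun i j hij => ?_⟩
  have hwins := two_mul_faceWins_profileDice_add σ i j
  rw [hσ i j hij, Fintype.card_fin]
  omega

/-- For `n` odd and positive, every tournament on `n` vertices is realized by a set of
`n` dice with `n` sides each. -/
theorem tournament_realized_by_dice_odd (n : ℕ) (hn : 0 < n) (hodd : Odd n)
    (T : Fin n → Fin n → Prop)
    (hirr : ∀ i, ¬ T i i)
    (htot : ∀ i j : Fin n, i ≠ j → (T i j ↔ ¬ T j i)) :
    ∃ X : Fin n → Fin n → ℕ,
      ∀ i j : Fin n, i ≠ j → (T i j ↔ 2 * faceWins n (X i) (X j) > n ^ 2) :=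
  tournament_realized_by_dice_odd_general n hodd T htot
end

section
/- Let n be a positive integer divisible by 4. For every tournament T on n vertices there exists a set of n dice, each with n + 1 sides (a function X : Fin n → Fin (n+1) → ℕ), that realizes T. -/
/-!
For `n = 2k` it suffices to find `2k + 1` rankings of the vertices such that `i` is above `j` in
exactly `k + 1` of them if `T i j` and in exactly `k` of them otherwise. Indeed, if face `a` of the
die of `i` carries `N * a` plus the value of `i` in ranking `a`, two dice compare lexicographically,
first by face and then by the ranking belonging to the face; so the die of `i` beats that of `j` on
the `(2k + 1) k` pairs of faces `b < a` and on the `k + [T i j]` diagonal pairs where `i` is above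
`j`, which is more than half of `(2k + 1)²` iff `T i j`. The rankings are built by induction on `k`:
remove two vertices `u → v`, extend the old rankings by putting `u` and `v` at the top or bottom,
and add two rankings that reverse each other on the old vertices.
-/

open Finset

theorem Nat.mul_add_lt_mul_add_iff {N a b r s : ℕ} (hr : r < N) (hs : s < N) :
    N * a + r < N * b + s ↔ a < b ∨ a = b ∧ r < s := by
  rcases lt_trichotomy a b with h | rfl | h
  · have : N * a + r < N * b := by nlinarith
    exact iff_of_true (by omega) (Or.inl h)
  · simp
  · have : N * b + s < N * a := by nlinarith
    exact iff_of_false (by omega) (by omega)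

def lexDie {m : ℕ} (N : ℕ) (F : Fin m → ℕ) : Fin m → ℕ := fun a => N * a + F a

theorem two_mul_faceWins_lexDie {m N : ℕ} {F G : Fin m → ℕ} (hF : ∀ a, F a < N)
    (hG : ∀ a, G a < N) :
    2 * faceWins m (lexDie N F) (lexDie N G) = m * (m - 1) + 2 * #{a | G a < F a} := by
  have hrow (a : Fin m) :
      #{b | lexDie N G b < lexDie N F a} = a + if G a < F a then 1 else 0 := by
    have : ({b | lexDie N G b < lexDie N F a} : Finset (Fin m)) =
        Iio a ∪ if G a < F a then {a} else ∅ := by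
      ext b
      rw [mem_filter_univ, lexDie, lexDie, Nat.mul_add_lt_mul_add_iff (hG b) (hF a), ← Fin.lt_def]
      rcases eq_or_ne b a with rfl | hba
      · split_ifs <;> simp [*]
      · split_ifs <;> simp [*, Fin.val_inj, lt_iff_le_and_ne]
    rw [this, card_union_of_disjoint (by split_ifs <;> simp), Fin.card_Iio]
    split_ifs <;> rfl
  have hsum : (∑ a : Fin m, (a : ℕ)) * 2 = m * (m - 1) := by
    rw [Fin.sum_univ_eq_sum_range (fun a => a), sum_range_id_mul_two]
  rw [faceWins, card_filter, Fintype.sum_prod_type]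
  simp only [gt_iff_lt, hrow, sum_add_distrib, sum_boole, Nat.cast_id]
  omega

theorem List.card_filter_getElem_eq_countP {α : Type*} (L : List α) {m : ℕ} (hm : L.length = m)
    (p : α → Prop) [DecidablePred p] :
    #{a : Fin m | p (L[(a : ℕ)]'(hm ▸ a.2))} = L.countP (p ·) := by
  subst hm
  induction L with
  | nil => simp
  | cons b L ih =>
    refine (Fin.card_filter_univ_succ (n := L.length) _).trans ?_
    simp only [Fin.val_zero, List.getElem_cons_zero, Fin.val_succ, List.getElem_cons_succ, ih,
      List.countP_cons]
    split_ifs <;> simp_all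

theorem List.exists_eq_append_cons_of_length_eq {α : Type*} {L : List α} {k : ℕ}
    (h : L.length = 2 * k + 1) : ∃ A g B, L = A ++ g :: B ∧ A.length = k ∧ B.length = k :=
  ⟨L.take k, L[k], L.drop (k + 1), by rw [← List.drop_eq_getElem_cons, List.take_append_drop],
    by simp; omega, by simp; omega⟩

section Rankings

variable {V : Type*}

def countAbove (L : List (V → ℕ)) (i j : V) : ℕ := L.countP fun f => f j < f i

@[simp] theorem countAbove_nil (i j : V) : countAbove [] i j = 0 := rfl

@[simp] theorem countAbove_cons (f : V → ℕ) (L : List (V → ℕ)) (i j : V) :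
    countAbove (f :: L) i j = countAbove L i j + if f j < f i then 1 else 0 := by
  simp [countAbove, List.countP_cons]

@[simp] theorem countAbove_append (L L' : List (V → ℕ)) (i j : V) :
    countAbove (L ++ L') i j = countAbove L i j + countAbove L' i j :=
  List.countP_append

theorem countAbove_map_eq_length {L : List (V → ℕ)} {φ : (V → ℕ) → V → ℕ} {i j : V}
    (h : ∀ f, φ f j < φ f i) : countAbove (L.map φ) i j = L.length := by
  rw [countAbove, List.countP_eq_length.mpr (by simp [h]), List.length_map]

theorem countAbove_map_eq_zero {L : List (V → ℕ)} {φ : (V → ℕ) → V → ℕ} {i j : V}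
    (h : ∀ f, φ f i < φ f j) : countAbove (L.map φ) i j = 0 :=
  List.countP_eq_zero.mpr (by simp [fun f => (h f).le])

theorem countAbove_map {L : List (V → ℕ)} {φ : (V → ℕ) → V → ℕ} {i j : V}
    (h : ∀ f, φ f j < φ f i ↔ f j < f i) : countAbove (L.map φ) i j = countAbove L i j := by
  simp only [countAbove, List.countP_map]
  exact List.countP_congr fun f _ => by simp [h]

variable [DecidableEq V] {a b x y : V}

def lowerPair (a b : V) (f : V → ℕ) : V → ℕ :=
  fun x => if x = a then 1 else if x = b then 0 else f x + 2

theorem lowerPair_lt_lowerPair_iff (hxa : x ≠ a) (hxb : x ≠ b) (hya : y ≠ a) (hyb : y ≠ b)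
    (f : V → ℕ) : lowerPair a b f y < lowerPair a b f x ↔ f y < f x := by
  simp [lowerPair, *]

theorem lowerPair_left_lt_lowerPair (hxa : x ≠ a) (hxb : x ≠ b) (f : V → ℕ) :
    lowerPair a b f a < lowerPair a b f x := by
  simp [lowerPair, *]

theorem lowerPair_right_lt_lowerPair (hab : a ≠ b) (hxb : x ≠ b) (f : V → ℕ) :
    lowerPair a b f b < lowerPair a b f x := by
  simp only [lowerPair, if_neg hab.symm, if_neg hxb]
  split_ifs <;> omega

variable [Fintype V]

def raiseLower (a b : V) (f : V → ℕ) : V → ℕ :=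
  fun x => if x = a then univ.sup f + 2 else if x = b then 0 else f x + 1

theorem raiseLower_lt_raiseLower_iff (hxa : x ≠ a) (hxb : x ≠ b) (hya : y ≠ a) (hyb : y ≠ b)
    (f : V → ℕ) : raiseLower a b f y < raiseLower a b f x ↔ f y < f x := by
  simp [raiseLower, *]

theorem raiseLower_lt_raiseLower_left (hxa : x ≠ a) (f : V → ℕ) :
    raiseLower a b f x < raiseLower a b f a := by
  have := le_sup (f := f) (mem_univ x)
  simp only [raiseLower, if_neg hxa]
  split_ifs <;> omega

theorem raiseLower_right_lt_raiseLower (hab : a ≠ b) (hxb : x ≠ b) (f : V → ℕ) :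
    raiseLower a b f b < raiseLower a b f x := by
  simp only [raiseLower, if_neg hab.symm, if_neg hxb]
  split_ifs <;> omega

variable (T : V → V → Prop) [DecidableRel T] (u v : V)

/- The other vertices `x` fall into four blocks according to whether `u → x` and whether `v → x`.
`blockRank` orders everything as
  `{u → x, x → v} < {u → x, v → x} < u < {x → u, v → x} < v < {x → u, x → v}`,
breaking ties inside a block by `Fintype.equivFin`. `blockRankRev` reverses this order on the other
vertices, puts `u` on top and `v` between the two lowest blocks of `blockRank`; the scale
`card V + 1` leaves a free value there. -/
def block (x : V) : ℕ :=
  if x = u then 2 else if x = v then 4 else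
    if T u x then (if T v x then 1 else 0) else (if T v x then 3 else 5)

noncomputable def blockRank (x : V) : ℕ :=
  (Fintype.card V + 1) * block T u v x + Fintype.equivFin V x

noncomputable def blockRankRev (x : V) : ℕ :=
  if x = u then 6 * (Fintype.card V + 1) else if x = v then 5 * (Fintype.card V + 1) else
    6 * (Fintype.card V + 1) - 1 - blockRank T u v x

variable {T u v}

theorem blockRank_injective : Function.Injective (blockRank T u v) := by
  intro x y h
  have := congrArg (· % (Fintype.card V + 1)) h
  simp only [blockRank, Nat.mul_add_mod] at this
  rw [Nat.mod_eq_of_lt (by omega), Nat.mod_eq_of_lt (by omega)] at this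
  exact (Fintype.equivFin V).injective (Fin.ext this)

theorem blockRank_lt_of_ne (hxu : x ≠ u) (hxv : x ≠ v) :
    blockRank T u v x + 1 < 6 * (Fintype.card V + 1) := by
  have := (Fintype.equivFin V x).isLt
  unfold blockRank block
  simp only [if_neg hxu, if_neg hxv]
  split_ifs <;> omega

theorem countAbove_blockRanks_of_ne (hxu : x ≠ u) (hxv : x ≠ v) (hyu : y ≠ u) (hyv : y ≠ v)
    (hxy : x ≠ y) : countAbove [blockRank T u v, blockRankRev T u v] x y = 1 := by
  have := blockRank_lt_of_ne (T := T) hxu hxv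
  have := blockRank_lt_of_ne (T := T) hyu hyv
  have := (blockRank_injective (T := T) (u := u) (v := v)).ne hxy
  simp only [countAbove_cons, countAbove_nil, blockRankRev, if_neg hxu, if_neg hxv, if_neg hyu,
    if_neg hyv]
  split_ifs <;> omega

theorem countAbove_blockRanks_left (hxu : x ≠ u) (hxv : x ≠ v) :
    countAbove [blockRank T u v, blockRankRev T u v] u x = (if T u x then 2 else 1) ∧
      countAbove [blockRank T u v, blockRankRev T u v] x u = if T u x then 0 else 1 := by
  have := (Fintype.equivFin V x).isLt
  have := (Fintype.equivFin V u).isLt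
  by_cases hux : T u x <;> by_cases hvx : T v x <;>
    simp [blockRankRev, blockRank, block, hxu, hxv, hux, hvx] <;> split_ifs <;> omega

theorem countAbove_blockRanks_right (huv : u ≠ v) (hxu : x ≠ u) (hxv : x ≠ v) :
    countAbove [blockRank T u v, blockRankRev T u v] v x = (if T v x then 2 else 1) ∧
      countAbove [blockRank T u v, blockRankRev T u v] x v = if T v x then 0 else 1 := by
  have := (Fintype.equivFin V x).isLt
  have := (Fintype.equivFin V v).isLt
  by_cases hux : T u x <;> by_cases hvx : T v x <;>
    simp [blockRankRev, blockRank, block, huv.symm, hxu, hxv, hux, hvx] <;> split_ifs <;> omega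

theorem countAbove_blockRanks_left_right (huv : u ≠ v) :
    countAbove [blockRank T u v, blockRankRev T u v] u v = 1 ∧
      countAbove [blockRank T u v, blockRankRev T u v] v u = 1 := by
  have := (Fintype.equivFin V u).isLt
  have := (Fintype.equivFin V v).isLt
  simp [blockRankRev, blockRank, block, huv.symm]
  omega

/- Every other vertex is below `u` and above `v` in the rankings of `A`, the other way round in
those of `B`, and above both in `g`; for `A` and `B` of the same length this balances the counts. -/
variable (T u v) in
noncomputable def extendRankings (A : List (V → ℕ)) (g : V → ℕ) (B : List (V → ℕ)) :
    List (V → ℕ) :=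
  A.map (raiseLower u v) ++ lowerPair u v g :: B.map (raiseLower v u) ++
    [blockRank T u v, blockRankRev T u v]

variable {A B : List (V → ℕ)} {g : V → ℕ}

theorem countAbove_extendRankings_of_ne (hxu : x ≠ u) (hxv : x ≠ v) (hyu : y ≠ u) (hyv : y ≠ v)
    (hxy : x ≠ y) :
    countAbove (extendRankings T u v A g B) x y = countAbove (A ++ g :: B) x y + 1 := by
  simp only [extendRankings, countAbove_append, countAbove_cons,
    countAbove_map (raiseLower_lt_raiseLower_iff hxu hxv hyu hyv),
    countAbove_map (raiseLower_lt_raiseLower_iff hxv hxu hyv hyu),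
    lowerPair_lt_lowerPair_iff hxu hxv hyu hyv, countAbove_blockRanks_of_ne hxu hxv hyu hyv hxy]

theorem countAbove_extendRankings_left (huv : u ≠ v) (hxu : x ≠ u) (hxv : x ≠ v) :
    countAbove (extendRankings T u v A g B) u x = A.length + 1 + (if T u x then 1 else 0) ∧
      countAbove (extendRankings T u v A g B) x u = B.length + 1 + (if T u x then 0 else 1) := by
  have hlower := lowerPair_left_lt_lowerPair hxu hxv g
  simp only [extendRankings, countAbove_append, countAbove_cons,
    countAbove_map_eq_length (raiseLower_lt_raiseLower_left (b := v) hxu),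
    countAbove_map_eq_zero (raiseLower_lt_raiseLower_left (b := v) hxu),
    countAbove_map_eq_zero (raiseLower_right_lt_raiseLower huv.symm hxu),
    countAbove_map_eq_length (raiseLower_right_lt_raiseLower huv.symm hxu),
    if_pos hlower, if_neg hlower.not_gt, countAbove_blockRanks_left hxu hxv]
  split_ifs <;> omega

theorem countAbove_extendRankings_right (huv : u ≠ v) (hxu : x ≠ u) (hxv : x ≠ v) :
    countAbove (extendRankings T u v A g B) v x = B.length + 1 + (if T v x then 1 else 0) ∧
      countAbove (extendRankings T u v A g B) x v = A.length + 1 + (if T v x then 0 else 1) := by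
  have hlower := lowerPair_right_lt_lowerPair huv hxv g
  simp only [extendRankings, countAbove_append, countAbove_cons,
    countAbove_map_eq_length (raiseLower_lt_raiseLower_left (b := u) hxv),
    countAbove_map_eq_zero (raiseLower_lt_raiseLower_left (b := u) hxv),
    countAbove_map_eq_zero (raiseLower_right_lt_raiseLower huv hxv),
    countAbove_map_eq_length (raiseLower_right_lt_raiseLower huv hxv),
    if_pos hlower, if_neg hlower.not_gt, countAbove_blockRanks_right huv hxu hxv, and_true]
  split_ifs <;> omega

theorem countAbove_extendRankings_left_right (huv : u ≠ v) :
    countAbove (extendRankings T u v A g B) u v = A.length + 2 ∧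
      countAbove (extendRankings T u v A g B) v u = B.length + 1 := by
  have hlower := lowerPair_right_lt_lowerPair huv huv g
  simp only [extendRankings, countAbove_append, countAbove_cons,
    countAbove_map_eq_length (raiseLower_lt_raiseLower_left (b := v) huv.symm),
    countAbove_map_eq_zero (raiseLower_lt_raiseLower_left (b := v) huv.symm),
    countAbove_map_eq_zero (raiseLower_right_lt_raiseLower huv.symm huv.symm),
    countAbove_map_eq_length (raiseLower_right_lt_raiseLower huv.symm huv.symm),
    if_pos hlower, if_neg hlower.not_gt, countAbove_blockRanks_left_right huv]
  simp

theorem countAbove_extendRankings (htot : ∀ i j, i ≠ j → (T i j ↔ ¬T j i)) (huv : u ≠ v)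
    (hTuv : T u v) {S : Finset V} (huS : u ∉ S) (hvS : v ∉ S) {k : ℕ} (hA : A.length = k)
    (hB : B.length = k)
    (hS : ∀ i ∈ S, ∀ j ∈ S, i ≠ j →
      countAbove (A ++ g :: B) i j = k + if T i j then 1 else 0) :
    ∀ i ∈ insert u (insert v S), ∀ j ∈ insert u (insert v S), i ≠ j →
      countAbove (extendRankings T u v A g B) i j = k + 1 + if T i j then 1 else 0 := by
  have hTvu : ¬T v u := (htot u v huv).mp hTuv
  intro i hi j hj hij
  simp only [mem_insert] at hi hj
  rcases hi with rfl | rfl | hi <;> rcases hj with rfl | rfl | hj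
  · exact absurd rfl hij
  · simp [(countAbove_extendRankings_left_right huv).1, hA, hTuv]
  · simp [(countAbove_extendRankings_left huv (ne_of_mem_of_not_mem hj huS)
      (ne_of_mem_of_not_mem hj hvS)).1, hA]
  · simp [(countAbove_extendRankings_left_right huv).2, hB, hTvu]
  · exact absurd rfl hij
  · simp [(countAbove_extendRankings_right huv (ne_of_mem_of_not_mem hj huS)
      (ne_of_mem_of_not_mem hj hvS)).1, hB]
  · rw [(countAbove_extendRankings_left huv (ne_of_mem_of_not_mem hi huS)
      (ne_of_mem_of_not_mem hi hvS)).2]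
    simp [htot _ _ hij, hB]
  · rw [(countAbove_extendRankings_right huv (ne_of_mem_of_not_mem hi huS)
      (ne_of_mem_of_not_mem hi hvS)).2]
    simp [htot _ _ hij, hA]
  · rw [countAbove_extendRankings_of_ne (ne_of_mem_of_not_mem hi huS) (ne_of_mem_of_not_mem hi hvS)
      (ne_of_mem_of_not_mem hj huS) (ne_of_mem_of_not_mem hj hvS) hij, hS i hi j hj hij]
    omega

theorem exists_rankings_countAbove_eq (htot : ∀ i j, i ≠ j → (T i j ↔ ¬T j i)) (k : ℕ)
    (S : Finset V) (hS : #S = 2 * k) :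
    ∃ L : List (V → ℕ), L.length = 2 * k + 1 ∧
      ∀ i ∈ S, ∀ j ∈ S, i ≠ j → countAbove L i j = k + if T i j then 1 else 0 := by
  induction k generalizing S with
  | zero =>
    refine ⟨[fun _ => 0], rfl, ?_⟩
    simp [card_eq_zero.mp hS]
  | succ k ih =>
    obtain ⟨u, hu, v, hv, huv, hTuv⟩ : ∃ u ∈ S, ∃ v ∈ S, u ≠ v ∧ T u v := by
      obtain ⟨a, ha, b, hb, hab⟩ := one_lt_card.mp (by omega : 1 < #S)
      by_cases h : T a b
      · exact ⟨a, ha, b, hb, hab, h⟩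
      · exact ⟨b, hb, a, ha, hab.symm, (htot b a hab.symm).mpr h⟩
    have hS' : #((S.erase u).erase v) = 2 * k := by
      rw [card_erase_of_mem (mem_erase.mpr ⟨huv.symm, hv⟩), card_erase_of_mem hu]
      omega
    obtain ⟨L, hL, hLS⟩ := ih _ hS'
    obtain ⟨A, g, B, rfl, hA, hB⟩ := List.exists_eq_append_cons_of_length_eq hL
    refine ⟨extendRankings T u v A g B, by simp [extendRankings, hA, hB]; ring, ?_⟩
    have hSeq : S = insert u (insert v ((S.erase u).erase v)) := by
      rw [insert_erase (mem_erase.mpr ⟨huv.symm, hv⟩), insert_erase hu]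
    rw [hSeq]
    exact countAbove_extendRankings htot huv hTuv (by simp) (by simp) hA hB hLS

theorem tournament_realized_by_dice_four_dvd_general (n : ℕ) (hdvd : 4 ∣ n)
    (T : Fin n → Fin n → Prop)
    (htot : ∀ i j : Fin n, i ≠ j → (T i j ↔ ¬ T j i)) :
    ∃ X : Fin n → Fin (n + 1) → ℕ,
      ∀ i j : Fin n, i ≠ j →
        (T i j ↔ 2 * faceWins (n + 1) (X i) (X j) > (n + 1) ^ 2) := by
  classical
  obtain ⟨k, rfl⟩ : ∃ k, n = 2 * k := ⟨n / 2, by omega⟩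
  obtain ⟨L, hL, hLT⟩ := exists_rankings_countAbove_eq htot k univ (by simp)
  let F (a : Fin (2 * k + 1)) : Fin (2 * k) → ℕ := L[(a : ℕ)]'(by omega)
  let N := univ.sup (fun p : Fin (2 * k + 1) × Fin (2 * k) => F p.1 p.2) + 1
  have hN (a x) : F a x < N :=
    Nat.lt_succ_of_le (le_sup (f := fun p => F p.1 p.2) (mem_univ (a, x)))
  refine ⟨fun i => lexDie N fun a => F a i, fun i j hij => ?_⟩
  rw [gt_iff_lt, two_mul_faceWins_lexDie (hN · i) (hN · j),
    L.card_filter_getElem_eq_countP hL (fun f => f j < f i)]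
  change _ ↔ _ < _ + 2 * countAbove L i j
  rw [hLT i (mem_univ i) j (mem_univ j) hij, Nat.add_sub_cancel]
  have hsq : (2 * k + 1) ^ 2 = (2 * k + 1) * (2 * k) + 2 * k + 1 := by ring
  by_cases h : T i j <;> simp [h] <;> omega

/-- For `n` positive and divisible by 4, every tournament on `n` vertices is realized by a
set of `n` dice with `n + 1` sides each. -/
theorem tournament_realized_by_dice_four_dvd (n : ℕ) (hn : 0 < n) (hdvd : 4 ∣ n)
    (T : Fin n → Fin n → Prop)
    (hirr : ∀ i, ¬ T i i)
    (htot : ∀ i j : Fin n, i ≠ j → (T i j ↔ ¬ T j i)) :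
    ∃ X : Fin n → Fin (n + 1) → ℕ,
      ∀ i j : Fin n, i ≠ j →
        (T i j ↔ 2 * faceWins (n + 1) (X i) (X j) > (n + 1) ^ 2) :=
  tournament_realized_by_dice_four_dvd_general n hdvd T htot
end Rankings
end

section
/- Let n ≥ 2 be an integer with n ≡ 2 (mod 4). For every tournament T on n vertices there exists a set of n dice, each with n − 1 sides (a function X : Fin n → Fin (n−1) → ℕ), that realizes T. -/
/-!
Write `n = 4s + 2` and take as players the points of the projective line
`Option (ZMod (4s+1))`, with `none` as `∞`, and as faces the rounds `m : ZMod (4s+1)` of the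
round robin in which `m + d` meets `m - d` and `m` meets `∞`. Each pair of round `m` gets a level
of its own, `2|d|` for `{m + d, m - d}` and `2s + 1` for `{m, ∞}`; in round `m` a die shows twice
its level, plus one if it beats its partner, plus a multiple of `m` large enough that faces of
different rounds compare by round alone. The cross-round pairs of faces then split evenly, so `i`
beats `j` iff `i` is higher in a majority of the `4s + 1` rounds. The two meet in exactly one round,
which the winner of their match takes, and otherwise `i` is above `j` as often as below: for finite
`i`, `j` by the symmetry `m ↦ i + j - m`, and for `∞` because `2s + 1` is the median of the levels
`2|d|`, `0 < |d| ≤ 2s`, which is where `n ≡ 2 (mod 4)` comes in.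
-/

open Finset

theorem mul_add_lt_mul_add_iff {a b c x y : ℕ} (hx : x < c) (hy : y < c) :
    c * b + y < c * a + x ↔ b < a ∨ b = a ∧ y < x := by
  rcases lt_trichotomy b a with h | rfl | h
  · have : c * (b + 1) ≤ c * a := Nat.mul_le_mul_left c h
    simp only [h, true_or, iff_true]
    linarith
  · simp
  · have : c * (a + 1) ≤ c * b := Nat.mul_le_mul_left c h
    simp only [h.not_gt, h.ne', false_and, or_false, iff_false, not_lt]
    linarith

theorem faceWins_stacked {k c : ℕ} {f g : Fin k → ℕ} (hf : ∀ a, f a < c) (hg : ∀ a, g a < c) :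
    faceWins k (fun a => c * a + f a) (fun a => c * a + g a) = k.choose 2 + #{a | g a < f a} := by
  unfold faceWins
  simp_rw [gt_iff_lt, mul_add_lt_mul_add_iff (hf _) (hg _), ← Fin.lt_def, Fin.val_inj]
  rw [filter_or, card_union_of_disjoint (disjoint_filter.2 fun p _ h h' => h'.1.not_lt h)]
  congr 1
  · have h := Fintype.card_product_filter_lt (α := Fin k)
    rw [Fintype.card_fin] at h
    exact h ▸ card_equiv (Equiv.prodComm _ _) (by simp)
  · rw [← diag_card {a | g a < f a}]
    congr 1
    ext ⟨a, b⟩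
    simp only [mem_filter, mem_univ, true_and, mem_diag]
    grind

theorem card_lt_add_card_lt_add_card_eq {R : Type*} [Fintype R] (f g : R → ℕ) :
    #{r | f r < g r} + #{r | g r < f r} + #{r | f r = g r} = Fintype.card R := by
  simp only [card_filter, ← sum_add_distrib, Fintype.card_eq_sum_ones]
  exact sum_congr rfl fun r _ => by split_ifs <;> omega

section BalancedSchedule

variable {P R : Type*} (level : R → P → ℕ) (T : P → P → Prop)

open scoped Classical in
/-- When no level of round `r` is shared by more than two players, the `j` here is the partner
of `i` in round `r`, so the last term records whether `i` wins their match. -/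
noncomputable def score (r : R) (i : P) : ℕ :=
  2 * level r i + if ∃ j, j ≠ i ∧ level r j = level r i ∧ T i j then 1 else 0

variable {level T}

theorem score_lt_score_iff (hT : ∀ i j, i ≠ j → (T i j ↔ ¬ T j i))
    (hpair : ∀ r i j l, i ≠ j → i ≠ l → level r j = level r i → level r l = level r i → j = l)
    {r : R} {i j : P} (hij : i ≠ j) :
    score level T r j < score level T r i ↔
      level r j < level r i ∨ level r j = level r i ∧ T i j := by
  classical
  have hbit : ∀ {a b : P}, a ≠ b → level r b = level r a →
      ((∃ l, l ≠ a ∧ level r l = level r a ∧ T a l) ↔ T a b) := fun {a b} hab hb =>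
    ⟨fun ⟨l, hla, hl, hTl⟩ => hpair r a b l hab hla.symm hb hl ▸ hTl,
      fun hTab => ⟨b, hab.symm, hb, hTab⟩⟩
  unfold score
  by_cases h : level r j = level r i
  · rw [if_congr (hbit hij h) rfl rfl, if_congr (hbit hij.symm h.symm) rfl rfl, h]
    have := hT i j hij
    split_ifs <;> simp_all
  · simp only [h, false_and, or_false]
    split_ifs <;> omega

open scoped Classical in
theorem card_score_lt_score [Fintype R] (hT : ∀ i j, i ≠ j → (T i j ↔ ¬ T j i))
    (hpair : ∀ r i j l, i ≠ j → i ≠ l → level r j = level r i → level r l = level r i → j = l)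
    {i j : P} (hij : i ≠ j) (hmeet : #{r | level r j = level r i} = 1) :
    #{r | score level T r j < score level T r i} =
      #{r | level r j < level r i} + if T i j then 1 else 0 := by
  simp_rw [score_lt_score_iff hT hpair hij]
  rw [filter_or, card_union_of_disjoint (disjoint_filter.2 fun r _ h h' => h'.1.not_lt h)]
  split_ifs with hTij <;> simp [hTij, hmeet]

theorem exists_dice_of_balanced_schedule [Fintype P] [Fintype R] {k : ℕ} (e : Fin k ≃ R)
    (hT : ∀ i j, i ≠ j → (T i j ↔ ¬ T j i))
    (hpair : ∀ r i j l, i ≠ j → i ≠ l → level r j = level r i → level r l = level r i → j = l)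
    (hmeet : ∀ i j, i ≠ j → #{r | level r j = level r i} = 1)
    (hbal : ∀ i j, i ≠ j → #{r | level r j < level r i} = #{r | level r i < level r j}) :
    ∃ X : P → Fin k → ℕ, ∀ i j, i ≠ j → (T i j ↔ 2 * faceWins k (X i) (X j) > k ^ 2) := by
  classical
  set L := univ.sup fun p : R × P => level p.1 p.2
  have hscore : ∀ r i, score level T r i < 2 * L + 2 := fun r i => by
    have : level r i ≤ L := le_sup (f := fun p : R × P => level p.1 p.2) (mem_univ (r, i))
    unfold score
    split_ifs <;> omega
  refine ⟨fun i a => (2 * L + 2) * a + score level T (e a) i, fun i j hij => ?_⟩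
  rw [faceWins_stacked (fun a => hscore _ _) (fun a => hscore _ _)]
  have hcount : #{a : Fin k | score level T (e a) j < score level T (e a) i} =
      #{r | level r j < level r i} + if T i j then 1 else 0 := by
    rw [← card_score_lt_score hT hpair hij (hmeet i j hij)]
    exact card_equiv e (by simp)
  have hk : 2 * #{r | level r j < level r i} + 1 = k := by
    have := card_lt_add_card_lt_add_card_eq (fun r => level r j) (fun r => level r i)
    rw [hmeet i j hij, ← hbal i j hij, ← Fintype.card_congr e, Fintype.card_fin] at this
    omega
  set M := #{r | level r j < level r i}
  have hchoose : (2 * M + 1).choose 2 = (2 * M + 1) * M := by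
    rw [Nat.choose_two_right, Nat.add_sub_cancel, mul_left_comm, Nat.mul_div_cancel_left _ two_pos]
  rw [hcount, ← hk, hchoose]
  by_cases hTij : T i j
  · exact iff_of_true hTij (by simp only [hTij, if_true]; nlinarith)
  · exact iff_of_false hTij (by simp only [hTij, if_false]; nlinarith)

end BalancedSchedule

def offset {G : Type*} [AddGroup G] (m : G) : Option G → G
  | none => 0
  | some i => i - m

section Offset

variable {G : Type*} [AddGroup G] {m : G} {i j l : Option G}

theorem offset_eq_zero_iff : offset m i = 0 ↔ i = none ∨ i = some m := by
  cases i <;> simp [offset, sub_eq_zero]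

theorem eq_of_offset_eq (h : offset m i = offset m j) (h0 : offset m i ≠ 0) : i = j := by
  cases i <;> cases j <;> simp_all [offset]

theorem eq_of_offset_add_eq_zero (hij : i ≠ j) (hil : i ≠ l) (hj : offset m i + offset m j = 0)
    (hl : offset m i + offset m l = 0) : j = l := by
  have hjl : offset m j = offset m l := add_left_cancel (hj.trans hl.symm)
  by_cases h0 : offset m j = 0
  · have hi : offset m i = 0 := by rwa [h0, add_zero] at hj
    have hl0 : offset m l = 0 := hjl ▸ h0
    rw [offset_eq_zero_iff] at hi h0 hl0
    rcases hi with rfl | rfl <;> rcases h0 with rfl | rfl <;> rcases hl0 with rfl | rfl <;>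
      simp_all
  · exact eq_of_offset_eq hjl h0

end Offset

section CyclicSchedule

variable (s : ℕ)

def cyclicLevel (d : ZMod (4 * s + 1)) : ℕ :=
  if d = 0 then 2 * s + 1 else 2 * d.valMinAbs.natAbs

def cyclicSchedule (m : ZMod (4 * s + 1)) (i : Option (ZMod (4 * s + 1))) : ℕ :=
  cyclicLevel s (offset m i)

theorem cyclicLevel_zero : cyclicLevel s 0 = 2 * s + 1 := if_pos rfl

theorem cyclicLevel_eq_cyclicLevel_iff {d e : ZMod (4 * s + 1)} :
    cyclicLevel s d = cyclicLevel s e ↔ d = e ∨ d = -e := by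
  unfold cyclicLevel
  split_ifs with hd he he
  · simp [hd, he]
  · exact iff_of_false (by omega) (by simp [hd, eq_comm, he])
  · exact iff_of_false (by omega) (by simpa [he] using hd)
  · rw [← ZMod.natAbs_valMinAbs_eq_natAbs_valMinAbs]
    omega

theorem cyclicLevel_neg (d : ZMod (4 * s + 1)) : cyclicLevel s (-d) = cyclicLevel s d :=
  (cyclicLevel_eq_cyclicLevel_iff s).2 (Or.inr rfl)

theorem card_cyclicLevel_lt : #{d : ZMod (4 * s + 1) | cyclicLevel s d < 2 * s + 1} = 2 * s := by
  set S := Icc 1 s ∪ Icc (3 * s + 1) (4 * s)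
  have hval : ∀ d : ZMod (4 * s + 1), cyclicLevel s d < 2 * s + 1 ↔ d.val ∈ S := fun d => by
    unfold cyclicLevel
    split_ifs with h
    · simp [h, S]
    · have := d.val_lt
      have h0 : d.val ≠ 0 := by rwa [ne_eq, ZMod.val_eq_zero]
      rw [ZMod.valMinAbs_natAbs_eq_min]
      simp only [S, mem_union, mem_Icc]
      omega
  have hS : ∀ v ∈ S, v < 4 * s + 1 := fun v hv => by simp only [S, mem_union, mem_Icc] at hv; omega
  calc #{d : ZMod (4 * s + 1) | cyclicLevel s d < 2 * s + 1}
      = #S := by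
        simp_rw [hval]
        refine card_nbij' ZMod.val (fun v => (v : ZMod (4 * s + 1))) ?_ ?_ ?_ ?_ <;>
          intro v hv <;> simp only [coe_filter, mem_coe, mem_univ, true_and] at hv ⊢
        · exact hv
        · rwa [Set.mem_ofPred_eq, ZMod.val_cast_of_lt (hS v hv)]
        · exact ZMod.natCast_zmod_val v
        · exact ZMod.val_cast_of_lt (hS v hv)
    _ = 2 * s := by
        rw [card_union_of_disjoint (disjoint_left.2 fun v h h' => by
          simp only [mem_Icc] at h h'; omega), Nat.card_Icc, Nat.card_Icc]
        omega

theorem two_mul_two_mul_add_one : (2 : ZMod (4 * s + 1)) * (2 * s + 1) = 1 := by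
  have h : ((4 * s + 1 : ℕ) : ZMod (4 * s + 1)) = 0 := ZMod.natCast_self _
  push_cast at h
  linear_combination h

variable {s} {i j : Option (ZMod (4 * s + 1))}

theorem cyclicSchedule_eq_iff {m : ZMod (4 * s + 1)} (hij : i ≠ j) :
    cyclicSchedule s m j = cyclicSchedule s m i ↔ offset m i + offset m j = 0 := by
  rw [cyclicSchedule, cyclicSchedule, cyclicLevel_eq_cyclicLevel_iff]
  constructor
  · rintro (h | h)
    · have h0 : offset m j = 0 := by_contra fun h0 => hij (eq_of_offset_eq h h0).symm
      rw [← h, h0, add_zero]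
    · rw [h, add_neg_cancel]
  · exact fun h => Or.inr (neg_eq_of_add_eq_zero_right h).symm

theorem card_offset_add_offset_eq_zero (hij : i ≠ j) :
    #{m : ZMod (4 * s + 1) | offset m i + offset m j = 0} = 1 := by
  have h2 := two_mul_two_mul_add_one s
  rw [card_eq_one]
  rcases i with _ | a <;> rcases j with _ | b
  · exact absurd rfl hij
  · exact ⟨b, by ext m; simp [offset, sub_eq_zero, eq_comm]⟩
  · exact ⟨a, by ext m; simp [offset, sub_eq_zero, eq_comm]⟩
  · refine ⟨(2 * s + 1) * (a + b), Finset.ext fun m => ?_⟩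
    rw [mem_filter, mem_singleton]
    simp only [offset, mem_univ, true_and]
    constructor
    · intro h
      linear_combination (-(2 * s + 1 : ZMod (4 * s + 1))) * h - m * h2
    · intro h
      linear_combination (-2 : ZMod (4 * s + 1)) * h - (a + b) * h2

theorem card_cyclicSchedule_eq (hij : i ≠ j) :
    #{m | cyclicSchedule s m j = cyclicSchedule s m i} = 1 := by
  rw [filter_congr fun m _ => cyclicSchedule_eq_iff hij]
  exact card_offset_add_offset_eq_zero hij

theorem eq_of_cyclicSchedule_eq {m : ZMod (4 * s + 1)} {l : Option (ZMod (4 * s + 1))}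
    (hij : i ≠ j) (hil : i ≠ l) (hj : cyclicSchedule s m j = cyclicSchedule s m i)
    (hl : cyclicSchedule s m l = cyclicSchedule s m i) : j = l :=
  eq_of_offset_add_eq_zero hij hil ((cyclicSchedule_eq_iff hij).1 hj)
    ((cyclicSchedule_eq_iff hil).1 hl)

theorem card_cyclicSchedule_lt_none (b : ZMod (4 * s + 1)) :
    #{m | cyclicSchedule s m (some b) < cyclicSchedule s m none} = 2 * s := by
  rw [← card_cyclicLevel_lt s]
  exact card_equiv (Equiv.subLeft b) fun m => by
    simp [cyclicSchedule, offset, cyclicLevel_zero]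

theorem card_cyclicSchedule_none_lt (b : ZMod (4 * s + 1)) :
    #{m | cyclicSchedule s m none < cyclicSchedule s m (some b)} = 2 * s := by
  have h := card_lt_add_card_lt_add_card_eq (fun m => cyclicSchedule s m (some b))
    (fun m => cyclicSchedule s m none)
  rw [card_cyclicSchedule_lt_none, card_cyclicSchedule_eq (Option.some_ne_none b).symm,
    ZMod.card] at h
  omega

theorem card_cyclicSchedule_lt_comm (hij : i ≠ j) :
    #{m | cyclicSchedule s m j < cyclicSchedule s m i} =
      #{m | cyclicSchedule s m i < cyclicSchedule s m j} := by
  rcases i with _ | a <;> rcases j with _ | b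
  · exact absurd rfl hij
  · rw [card_cyclicSchedule_lt_none, card_cyclicSchedule_none_lt]
  · rw [card_cyclicSchedule_none_lt, card_cyclicSchedule_lt_none]
  · refine card_equiv (Equiv.subLeft (a + b)) fun m => ?_
    simp only [mem_filter, mem_univ, true_and]
    simp only [Equiv.subLeft_apply, cyclicSchedule, offset]
    rw [show a - (a + b - m) = -(b - m) by abel, show b - (a + b - m) = -(a - m) by abel,
      cyclicLevel_neg, cyclicLevel_neg]

end CyclicSchedule

theorem tournament_realized_by_dice_two_mod_four_general (n : ℕ) (hmod : n % 4 = 2)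
    (T : Fin n → Fin n → Prop)
    (htot : ∀ i j : Fin n, i ≠ j → (T i j ↔ ¬ T j i)) :
    ∃ X : Fin n → Fin (n - 1) → ℕ,
      ∀ i j : Fin n, i ≠ j →
        (T i j ↔ 2 * faceWins (n - 1) (X i) (X j) > (n - 1) ^ 2) := by
  obtain ⟨s, rfl⟩ : ∃ s, n = 4 * s + 2 := ⟨n / 4, by omega⟩
  rw [show 4 * s + 2 - 1 = 4 * s + 1 by omega]
  let φ : Fin (4 * s + 2) ≃ Option (ZMod (4 * s + 1)) :=
    finSuccEquivLast.trans (ZMod.finEquiv (4 * s + 1)).toEquiv.optionCongr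
  exact exists_dice_of_balanced_schedule (level := fun m i => cyclicSchedule s m (φ i))
    (ZMod.finEquiv (4 * s + 1)).toEquiv htot
    (fun _ _ _ _ hij hil hj hl => φ.injective
      (eq_of_cyclicSchedule_eq (φ.injective.ne hij) (φ.injective.ne hil) hj hl))
    (fun _ _ hij => card_cyclicSchedule_eq (φ.injective.ne hij))
    (fun _ _ hij => card_cyclicSchedule_lt_comm (φ.injective.ne hij))

/-- For `n ≥ 2` with `n ≡ 2 (mod 4)`, every tournament on `n` vertices is realized by a
set of `n` dice with `n - 1` sides each. -/
theorem tournament_realized_by_dice_two_mod_four (n : ℕ) (hn : 2 ≤ n) (hmod : n % 4 = 2)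
    (T : Fin n → Fin n → Prop)
    (hirr : ∀ i, ¬ T i i)
    (htot : ∀ i j : Fin n, i ≠ j → (T i j ↔ ¬ T j i)) :
    ∃ X : Fin n → Fin (n - 1) → ℕ,
      ∀ i j : Fin n, i ≠ j →
        (T i j ↔ 2 * faceWins (n - 1) (X i) (X j) > (n - 1) ^ 2) :=
  tournament_realized_by_dice_two_mod_four_general n hmod T htot
end

section
/- Let n ≥ 1. For every tournament T on n vertices there exist an odd positive integer k with k ≤ n + 1 and a set of n dice, each with k sides X : Fin n → Fin k → ℕ, such that for all distinct i, j in Fin n: if T has an edge from i to j, then the number of face wins of die X i over die X j is exactly (k² + 1)/2 (equivalently, the probability that die i rolls higher than die j is exactly 1/2 + 1/(2k²)). -/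
open Finset

lemma bandLt (M A B e f : ℕ) (hM : 0 < M) (he : e < M) (hf : f < M) :
    M * B + f < M * A + e ↔ B < A ∨ (B = A ∧ f < e) := by
  constructor
  · intro h
    rcases lt_trichotomy B A with h1 | h1 | h1
    · exact Or.inl h1
    · subst h1; exact Or.inr ⟨rfl, by omega⟩
    · exfalso
      have h2 : M * (A + 1) ≤ M * B := Nat.mul_le_mul_left M (by omega)
      have h3 : M * (A + 1) = M * A + M := by ring
      omega
  · rintro (h | ⟨rfl, h⟩)
    · have h2 : M * (B + 1) ≤ M * A := Nat.mul_le_mul_left M (by omega)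
      have h3 : M * (B + 1) = M * B + M := by ring
      omega
    · omega

lemma fin_filter_val_card (k : ℕ) (Q : ℕ → Prop) [DecidablePred Q] :
    (univ.filter (fun a : Fin k => Q a.val)).card = ((Finset.range k).filter Q).card := by
  rw [Finset.card_filter, Finset.card_filter]
  exact Fin.sum_univ_eq_sum_range (fun i => if Q i then 1 else 0) k

lemma cardA (t : ℕ) : (univ.filter (fun a : Fin (2*t+1) => a.val < t)).card = t := by
  refine (fin_filter_val_card (2*t+1) (fun a => a < t)).trans ?_
  have : (Finset.range (2*t+1)).filter (fun a => a < t) = Finset.range t := by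
    ext a; simp [Finset.mem_range]; omega
  rw [this, Finset.card_range]

lemma cardB (t : ℕ) : (univ.filter (fun a : Fin (2*t+1) => t ≤ a.val)).card = t + 1 := by
  refine (fin_filter_val_card (2*t+1) (fun a => t ≤ a)).trans ?_
  have : (Finset.range (2*t+1)).filter (fun a => t ≤ a) = Finset.Ico t (2*t+1) := by
    ext a; simp [Finset.mem_range, Finset.mem_Ico]; omega
  rw [this, Nat.card_Ico]; omega

lemma cardC (t : ℕ) : (univ.filter (fun a : Fin (2*t+1) => t ≤ a.val ∧ a.val < 2*t)).card = t := by
  refine (fin_filter_val_card (2*t+1) (fun a => t ≤ a ∧ a < 2*t)).trans ?_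
  have : (Finset.range (2*t+1)).filter (fun a => t ≤ a ∧ a < 2*t) = Finset.Ico t (2*t) := by
    ext a; simp [Finset.mem_range, Finset.mem_Ico]; omega
  rw [this, Nat.card_Ico]; omega

lemma cardD (t : ℕ) : (univ.filter (fun a : Fin (2*t+1) => a.val < t ∨ a.val = 2*t)).card = t + 1 := by
  refine (fin_filter_val_card (2*t+1) (fun a => a < t ∨ a = 2*t)).trans ?_
  have : (Finset.range (2*t+1)).filter (fun a => a < t ∨ a = 2*t)
      = insert (2*t) (Finset.range t) := by
    ext a; simp [Finset.mem_range, Finset.mem_insert]; omega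
  rw [this, Finset.card_insert_of_notMem (by simp; omega), Finset.card_range]

lemma count_split (k : ℕ) (P : Fin (k+2) → Prop) [DecidablePred P] :
    (univ.filter P).card =
      (univ.filter (fun a : Fin k => P (Fin.castAdd 2 a))).card
      + (if P ⟨k, by omega⟩ then 1 else 0) + (if P ⟨k+1, by omega⟩ then 1 else 0) := by
  rw [Finset.card_filter, Finset.card_filter]
  rw [Fin.sum_univ_castSucc (f := fun a : Fin (k+2) => if P a then 1 else 0)]
  rw [Fin.sum_univ_castSucc (f := fun a : Fin (k+1) => if P a.castSucc then 1 else 0)]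
  have h1 : (Fin.last (k+1)) = (⟨k+1, by omega⟩ : Fin (k+2)) := rfl
  have h2 : (Fin.last k).castSucc = (⟨k, by omega⟩ : Fin (k+2)) := rfl
  have h3 : ∀ a : Fin k, (a.castSucc).castSucc = Fin.castAdd 2 a := fun a => rfl
  simp only [h1, h2, h3]

/-- helper: value of an "old" die extended to `Fin (m+2)` indices. -/
def rrD (m t : ℕ) (r : Fin m → Fin (2*t+1) → ℕ) (i : Fin (m+2)) (a : Fin (2*t+1)) : ℕ :=
  if h : i.val < m then r ⟨i.val, h⟩ a else 0

/-- The extended dice construction. -/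
def FD (m t B : ℕ) (r : Fin m → Fin (2*t+1) → ℕ) (u v : Fin (m+2)) (c : Fin (m+2) → ℕ)
    (i : Fin (m+2)) (p : ℕ) : ℕ :=
  if i = u then
    (if p < t then B+2 else if p < 2*t then 0 else if p < 2*t+1 then 1
      else if p = 2*t+1 then (m+3)*4 else (m+3)*8)
  else if i = v then
    (if p < t then 0 else if p < 2*t then B+2 else if p < 2*t+1 then 0 else (m+3)*6)
  else
    (if h : p < 2*t+1 then rrD m t r i ⟨p,h⟩ + 2
      else if p = 2*t+1 then (m+3)*(2 * c i + 1) + i.val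
      else (m+3)*(2*(3 - c i) + 1) + (m+1 - i.val))

section FDeval

variable (m t B : ℕ) (r : Fin m → Fin (2*t+1) → ℕ) (u v : Fin (m+2)) (c : Fin (m+2) → ℕ)

lemma FD_u_old (p : ℕ) (hp : p < 2*t+1) :
    FD m t B r u v c u p = (if p < t then B+2 else if p < 2*t then 0 else 1) := by
  unfold FD; rw [if_pos rfl]; split_ifs <;> omega

lemma FD_u_x : FD m t B r u v c u (2*t+1) = (m+3)*4 := by
  unfold FD; rw [if_pos rfl]; split_ifs <;> omega

lemma FD_u_y : FD m t B r u v c u (2*t+1+1) = (m+3)*8 := by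
  unfold FD; rw [if_pos rfl]; split_ifs <;> omega

lemma FD_v_old (hvu : v ≠ u) (p : ℕ) (hp : p < 2*t+1) :
    FD m t B r u v c v p = (if p < t then 0 else if p < 2*t then B+2 else 0) := by
  unfold FD; rw [if_neg hvu, if_pos rfl]; split_ifs <;> omega

lemma FD_v_x (hvu : v ≠ u) : FD m t B r u v c v (2*t+1) = (m+3)*6 := by
  unfold FD; rw [if_neg hvu, if_pos rfl]; split_ifs <;> omega

lemma FD_v_y (hvu : v ≠ u) : FD m t B r u v c v (2*t+1+1) = (m+3)*6 := by
  unfold FD; rw [if_neg hvu, if_pos rfl]; split_ifs <;> omega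

lemma FD_o_old (i : Fin (m+2)) (hiu : i ≠ u) (hiv : i ≠ v) (a : Fin (2*t+1)) :
    FD m t B r u v c i a.val = rrD m t r i a + 2 := by
  unfold FD; rw [if_neg hiu, if_neg hiv, dif_pos a.isLt]

lemma FD_o_x (i : Fin (m+2)) (hiu : i ≠ u) (hiv : i ≠ v) :
    FD m t B r u v c i (2*t+1) = (m+3)*(2 * c i + 1) + i.val := by
  unfold FD; rw [if_neg hiu, if_neg hiv, dif_neg (by omega), if_pos rfl]

lemma FD_o_y (i : Fin (m+2)) (hiu : i ≠ u) (hiv : i ≠ v) :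
    FD m t B r u v c i (2*t+1+1) = (m+3)*(2*(3 - c i) + 1) + (m+1 - i.val) := by
  unfold FD; rw [if_neg hiu, if_neg hiv, dif_neg (by omega), if_neg (by omega)]

end FDeval

lemma step (m t : ℕ) (T : Fin (m+2) → Fin (m+2) → Prop)
    (hasym : ∀ i j, T i j → ¬ T j i)
    (u v : Fin (m+2)) (huv : u ≠ v)
    (hold : ∀ i : Fin (m+2), i ≠ u → i ≠ v → i.val < m)
    (hvu : ¬ T v u)
    (r : Fin m → Fin (2*t+1) → ℕ)
    (hr : ∀ i j : Fin m, T (Fin.castAdd 2 i) (Fin.castAdd 2 j) →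
      ((univ : Finset (Fin (2*t+1))).filter (fun a => r j a < r i a)).card = t + 1) :
    ∃ r' : Fin (m+2) → Fin (2*t+1+2) → ℕ,
      ∀ i j, T i j →
        ((univ : Finset (Fin (2*t+1+2))).filter (fun a => r' j a < r' i a)).card = t + 2 := by
  classical
  set B := (univ.sup fun p : Fin m × Fin (2*t+1) => r p.1 p.2) + 1 with hB
  have hrB : ∀ (i : Fin (m+2)) (a : Fin (2*t+1)), rrD m t r i a < B := by
    intro i a
    unfold rrD
    split_ifs with h
    · have h2 := Finset.le_sup (f := fun p : Fin m × Fin (2*t+1) => r p.1 p.2)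
        (Finset.mem_univ ((⟨i.val, h⟩ : Fin m), a))
      simp only at h2
      omega
    · omega
  set c : Fin (m+2) → ℕ :=
    fun i => if T i u then (if T i v then 3 else 2) else (if T i v then 0 else 1) with hc
  have hcu : ∀ i, T i u → (c i = 2 ∨ c i = 3) := by
    intro i h; by_cases h2 : T i v <;> simp [hc, h, h2]
  have hcu' : ∀ i, ¬ T i u → (c i = 0 ∨ c i = 1) := by
    intro i h; by_cases h2 : T i v <;> simp [hc, h, h2]
  have hcv : ∀ i, T i v → (c i = 0 ∨ c i = 3) := by
    intro i h; by_cases h2 : T i u <;> simp [hc, h, h2]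
  have hcv' : ∀ i, ¬ T i v → (c i = 1 ∨ c i = 2) := by
    intro i h; by_cases h2 : T i u <;> simp [hc, h, h2]
  have hc3 : ∀ i, c i ≤ 3 := by
    intro i; rw [hc]; dsimp only; split_ifs <;> omega
  refine ⟨fun i a => FD m t B r u v c i a.val, ?_⟩
  intro i j hT
  have hij : i ≠ j := by rintro rfl; exact hasym i i hT hT
  show ((univ : Finset (Fin (2*t+1+2))).filter
      (fun a => FD m t B r u v c j a.val < FD m t B r u v c i a.val)).card = t + 2
  rw [count_split (2*t+1) (fun a : Fin (2*t+1+2) =>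
      FD m t B r u v c j a.val < FD m t B r u v c i a.val)]
  simp only [Fin.coe_castAdd]
  by_cases hiu : i = u
  · rw [hiu] at hT ⊢
    rw [hiu] at hij
    by_cases hjv : j = v
    · -- case 6 : u vs v
      rw [hjv]
      have hOld : ((univ : Finset (Fin (2*t+1))).filter
          (fun a => FD m t B r u v c v a.val < FD m t B r u v c u a.val)).card = t + 1 := by
        have hiff : ∀ a ∈ (univ : Finset (Fin (2*t+1))),
            (FD m t B r u v c v a.val < FD m t B r u v c u a.val) ↔ (a.val < t ∨ a.val = 2*t) := by
          intro a _
          rw [FD_v_old m t B r u v c huv.symm a.val a.isLt, FD_u_old m t B r u v c a.val a.isLt]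
          have h2 := a.isLt
          split_ifs <;> omega
        rw [Finset.filter_congr hiff, cardD t]
      have hx : ¬ (FD m t B r u v c v (2*t+1) < FD m t B r u v c u (2*t+1)) := by
        rw [FD_v_x m t B r u v c huv.symm, FD_u_x m t B r u v c]; omega
      have hy : FD m t B r u v c v (2*t+1+1) < FD m t B r u v c u (2*t+1+1) := by
        rw [FD_v_y m t B r u v c huv.symm, FD_u_y m t B r u v c]; omega
      rw [hOld, if_neg hx, if_pos hy]
    · by_cases hju : j = u
      · exact absurd hju.symm hij
      · -- case 2 : u vs old j
        have hcj : c j = 0 ∨ c j = 1 := hcu' j (hasym u j hT)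
        have hjlt := j.isLt
        have hOld : ((univ : Finset (Fin (2*t+1))).filter
            (fun a => FD m t B r u v c j a.val < FD m t B r u v c u a.val)).card = t := by
          have hiff : ∀ a ∈ (univ : Finset (Fin (2*t+1))),
              (FD m t B r u v c j a.val < FD m t B r u v c u a.val) ↔ (a.val < t) := by
            intro a _
            rw [FD_o_old m t B r u v c j hju hjv a, FD_u_old m t B r u v c a.val a.isLt]
            have h1 := hrB j a
            have h2 := a.isLt
            split_ifs <;> omega
          rw [Finset.filter_congr hiff, cardA t]
        have hx : FD m t B r u v c j (2*t+1) < FD m t B r u v c u (2*t+1) := by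
          rw [FD_o_x m t B r u v c j hju hjv, FD_u_x m t B r u v c]
          rcases hcj with h | h <;> rw [h] <;> omega
        have hy : FD m t B r u v c j (2*t+1+1) < FD m t B r u v c u (2*t+1+1) := by
          rw [FD_o_y m t B r u v c j hju hjv, FD_u_y m t B r u v c]
          rcases hcj with h | h <;> rw [h] <;> omega
        rw [hOld, if_pos hx, if_pos hy]
  · by_cases hiv : i = v
    · rw [hiv] at hT ⊢
      rw [hiv] at hij
      by_cases hju : j = u
      · rw [hju] at hT; exact absurd hT hvu
      · by_cases hjv : j = v
        · exact absurd hjv.symm hij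
        · -- case 4 : v vs old j
          have hcj : c j = 1 ∨ c j = 2 := hcv' j (hasym v j hT)
          have hjlt := j.isLt
          have hOld : ((univ : Finset (Fin (2*t+1))).filter
              (fun a => FD m t B r u v c j a.val < FD m t B r u v c v a.val)).card = t := by
            have hiff : ∀ a ∈ (univ : Finset (Fin (2*t+1))),
                (FD m t B r u v c j a.val < FD m t B r u v c v a.val)
                  ↔ (t ≤ a.val ∧ a.val < 2*t) := by
              intro a _
              rw [FD_o_old m t B r u v c j hju hjv a, FD_v_old m t B r u v c huv.symm a.val a.isLt]
              have h1 := hrB j a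
              have h2 := a.isLt
              split_ifs <;> omega
            rw [Finset.filter_congr hiff, cardC t]
          have hx : FD m t B r u v c j (2*t+1) < FD m t B r u v c v (2*t+1) := by
            rw [FD_o_x m t B r u v c j hju hjv, FD_v_x m t B r u v c huv.symm]
            rcases hcj with h | h <;> rw [h] <;> omega
          have hy : FD m t B r u v c j (2*t+1+1) < FD m t B r u v c v (2*t+1+1) := by
            rw [FD_o_y m t B r u v c j hju hjv, FD_v_y m t B r u v c huv.symm]
            rcases hcj with h | h <;> rw [h] <;> omega
          rw [hOld, if_pos hx, if_pos hy]
    · by_cases hju : j = u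
      · -- case 3 : old i vs u
        rw [hju] at hT ⊢
        have hci : c i = 2 ∨ c i = 3 := hcu i hT
        have hilt := i.isLt
        have hOld : ((univ : Finset (Fin (2*t+1))).filter
            (fun a => FD m t B r u v c u a.val < FD m t B r u v c i a.val)).card = t + 1 := by
          have hiff : ∀ a ∈ (univ : Finset (Fin (2*t+1))),
              (FD m t B r u v c u a.val < FD m t B r u v c i a.val) ↔ (t ≤ a.val) := by
            intro a _
            rw [FD_o_old m t B r u v c i hiu hiv a, FD_u_old m t B r u v c a.val a.isLt]
            have h1 := hrB i a
            have h2 := a.isLt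
            split_ifs <;> omega
          rw [Finset.filter_congr hiff, cardB t]
        have hx : FD m t B r u v c u (2*t+1) < FD m t B r u v c i (2*t+1) := by
          rw [FD_o_x m t B r u v c i hiu hiv, FD_u_x m t B r u v c]
          rcases hci with h | h <;> rw [h] <;> omega
        have hy : ¬ (FD m t B r u v c u (2*t+1+1) < FD m t B r u v c i (2*t+1+1)) := by
          rw [FD_o_y m t B r u v c i hiu hiv, FD_u_y m t B r u v c]
          rcases hci with h | h <;> rw [h] <;> omega
        rw [hOld, if_pos hx, if_neg hy]
      · by_cases hjv : j = v
        · -- case 5 : old i vs v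
          rw [hjv] at hT ⊢
          have hci : c i = 0 ∨ c i = 3 := hcv i hT
          have hilt := i.isLt
          have hOld : ((univ : Finset (Fin (2*t+1))).filter
              (fun a => FD m t B r u v c v a.val < FD m t B r u v c i a.val)).card = t + 1 := by
            have hiff : ∀ a ∈ (univ : Finset (Fin (2*t+1))),
                (FD m t B r u v c v a.val < FD m t B r u v c i a.val)
                  ↔ (a.val < t ∨ a.val = 2*t) := by
              intro a _
              rw [FD_o_old m t B r u v c i hiu hiv a, FD_v_old m t B r u v c huv.symm a.val a.isLt]
              have h1 := hrB i a
              have h2 := a.isLt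
              split_ifs <;> omega
            rw [Finset.filter_congr hiff, cardD t]
          rcases hci with h | h
          · have hx : ¬ (FD m t B r u v c v (2*t+1) < FD m t B r u v c i (2*t+1)) := by
              rw [FD_o_x m t B r u v c i hiu hiv, FD_v_x m t B r u v c huv.symm, h]; omega
            have hy : FD m t B r u v c v (2*t+1+1) < FD m t B r u v c i (2*t+1+1) := by
              rw [FD_o_y m t B r u v c i hiu hiv, FD_v_y m t B r u v c huv.symm, h]; omega
            rw [hOld, if_neg hx, if_pos hy]
          · have hx : FD m t B r u v c v (2*t+1) < FD m t B r u v c i (2*t+1) := by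
              rw [FD_o_x m t B r u v c i hiu hiv, FD_v_x m t B r u v c huv.symm, h]; omega
            have hy : ¬ (FD m t B r u v c v (2*t+1+1) < FD m t B r u v c i (2*t+1+1)) := by
              rw [FD_o_y m t B r u v c i hiu hiv, FD_v_y m t B r u v c huv.symm, h]; omega
            rw [hOld, if_pos hx, if_neg hy]
        · -- case 1 : both old
          have hi' := hold i hiu hiv
          have hj' := hold j hju hjv
          have hilt := i.isLt
          have hjlt := j.isLt
          have hvals : i.val ≠ j.val := fun h => hij (Fin.ext h)
          have hT' : T (Fin.castAdd 2 ⟨i.val, hi'⟩) (Fin.castAdd 2 ⟨j.val, hj'⟩) := by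
            have e1 : Fin.castAdd 2 (⟨i.val, hi'⟩ : Fin m) = i := by apply Fin.ext; rfl
            have e2 : Fin.castAdd 2 (⟨j.val, hj'⟩ : Fin m) = j := by apply Fin.ext; rfl
            rw [e1, e2]; exact hT
          have hrri : ∀ a, rrD m t r i a = r ⟨i.val, hi'⟩ a := by
            intro a; unfold rrD; rw [dif_pos hi']
          have hrrj : ∀ a, rrD m t r j a = r ⟨j.val, hj'⟩ a := by
            intro a; unfold rrD; rw [dif_pos hj']
          have hOld : ((univ : Finset (Fin (2*t+1))).filter
              (fun a => FD m t B r u v c j a.val < FD m t B r u v c i a.val)).card = t + 1 := by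
            have hiff : ∀ a ∈ (univ : Finset (Fin (2*t+1))),
                (FD m t B r u v c j a.val < FD m t B r u v c i a.val)
                  ↔ (r ⟨j.val, hj'⟩ a < r ⟨i.val, hi'⟩ a) := by
              intro a _
              rw [FD_o_old m t B r u v c i hiu hiv a, FD_o_old m t B r u v c j hju hjv a,
                hrri a, hrrj a]
              omega
            rw [Finset.filter_congr hiff]
            exact hr ⟨i.val, hi'⟩ ⟨j.val, hj'⟩ hT'
          rw [hOld, FD_o_x m t B r u v c i hiu hiv, FD_o_x m t B r u v c j hju hjv,
            FD_o_y m t B r u v c i hiu hiv, FD_o_y m t B r u v c j hju hjv]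
          have h3i := hc3 i
          have h3j := hc3 j
          rcases (by omega : c i = 0 ∨ c i = 1 ∨ c i = 2 ∨ c i = 3) with h1 | h1 | h1 | h1 <;>
            rcases (by omega : c j = 0 ∨ c j = 1 ∨ c j = 2 ∨ c j = 3) with h2 | h2 | h2 | h2 <;>
            rw [h1, h2] <;> split_ifs <;> omega

lemma core : ∀ (n : ℕ) (T : Fin n → Fin n → Prop), (∀ i j, T i j → ¬ T j i) →
    ∃ k : ℕ, 0 < k ∧ Odd k ∧ k ≤ n + 1 ∧ ∃ r : Fin n → Fin k → ℕ,
      ∀ i j, T i j →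
        ((univ : Finset (Fin k)).filter (fun a => r j a < r i a)).card = (k+1)/2 := by
  intro n
  induction n using Nat.strong_induction_on with
  | _ n ih =>
    match n with
    | 0 =>
      intro T hasym
      exact ⟨1, one_pos, odd_one, by omega, fun _ _ => 0, fun i j h => i.elim0⟩
    | 1 =>
      intro T hasym
      refine ⟨1, one_pos, odd_one, by omega, fun _ _ => 0, fun i j h => ?_⟩
      have : i = j := Subsingleton.elim i j
      exact absurd h (this ▸ hasym i j h)
    | (m+2) =>
      intro T hasym
      obtain ⟨k, hk0, hkodd, hkle, r, hrk⟩ :=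
        ih m (by omega) (fun i j => T (Fin.castAdd 2 i) (Fin.castAdd 2 j))
          (fun i j h => hasym _ _ h)
      obtain ⟨t, rfl⟩ : ∃ t, k = 2*t+1 := by
        have := Nat.odd_iff.mp hkodd; exact ⟨k/2, by omega⟩
      have hr : ∀ i j : Fin m, T (Fin.castAdd 2 i) (Fin.castAdd 2 j) →
          ((univ : Finset (Fin (2*t+1))).filter (fun a => r j a < r i a)).card = t + 1 := by
        intro i j h; rw [hrk i j h]; omega
      set vm : Fin (m+2) := ⟨m, by omega⟩ with hvm
      set vm1 : Fin (m+2) := ⟨m+1, by omega⟩ with hvm1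
      have hne : vm1 ≠ vm := by
        intro h
        rw [hvm1, hvm] at h
        have h2 : (m+1 : ℕ) = m := congrArg Fin.val h
        omega
      have hold1 : ∀ i : Fin (m+2), i ≠ vm → i ≠ vm1 → i.val < m := by
        intro i h1 h2
        have h3 := i.isLt
        have h4 : i.val ≠ m := fun h => h1 (Fin.ext h)
        have h5 : i.val ≠ m+1 := fun h => h2 (Fin.ext h)
        omega
      by_cases hT : T vm1 vm
      · obtain ⟨r', hr'⟩ := step m t T hasym vm1 vm hne
          (fun i h1 h2 => hold1 i h2 h1) (hasym vm1 vm hT) r hr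
        exact ⟨2*t+1+2, by omega, by rw [Nat.odd_iff]; omega, by omega, r',
          fun i j h => by rw [hr' i j h]; omega⟩
      · obtain ⟨r', hr'⟩ := step m t T hasym vm vm1 hne.symm hold1 hT r hr
        exact ⟨2*t+1+2, by omega, by rw [Nat.odd_iff]; omega, by omega, r',
          fun i j h => by rw [hr' i j h]; omega⟩

/-- For every tournament `T` on `n ≥ 1` vertices there exist an odd positive `k ≤ n + 1`
and a set of `n` dice with `k` sides such that whenever `T` has an edge from `i` to `j`,
die `i` has exactly `(k² + 1)/2` face wins over die `j`. -/
theorem tournament_realized_by_balanced_dice (n : ℕ) (hn : 1 ≤ n)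
    (T : Fin n → Fin n → Prop)
    (hirr : ∀ i, ¬ T i i)
    (htot : ∀ i j : Fin n, i ≠ j → (T i j ↔ ¬ T j i)) :
    ∃ k : ℕ, 0 < k ∧ Odd k ∧ k ≤ n + 1 ∧ ∃ X : Fin n → Fin k → ℕ,
      ∀ i j : Fin n, i ≠ j → T i j →
        2 * faceWins k (X i) (X j) = k ^ 2 + 1 := by
  classical
  have hasym : ∀ i j : Fin n, T i j → ¬ T j i := by
    intro i j hij hji
    by_cases h : i = j
    · exact hirr i (h ▸ hij)
    · exact ((htot i j h).mp hij) hji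
  obtain ⟨k, hk0, hkodd, hkle, r, hr⟩ := core n T hasym
  set C := (univ.sup fun p : Fin n × Fin k => r p.1 p.2) + 1 with hC
  have hC0 : 0 < C := by omega
  have hrC : ∀ (i : Fin n) (a : Fin k), r i a < C := by
    intro i a
    have h2 := Finset.le_sup (f := fun p : Fin n × Fin k => r p.1 p.2)
      (Finset.mem_univ (i, a))
    simp only at h2
    omega
  refine ⟨k, hk0, hkodd, hkle, fun i a => C * a.val + r i a, ?_⟩
  intro i j hne hT
  show 2 * (Finset.univ.filter (fun p : Fin k × Fin k =>
      C * p.2.val + r j p.2 < C * p.1.val + r i p.1)).card = k ^ 2 + 1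
  have hP : ∀ p : Fin k × Fin k,
      (C * p.2.val + r j p.2 < C * p.1.val + r i p.1) ↔
        (p.2.val < p.1.val ∨ (p.1 = p.2 ∧ r j p.2 < r i p.1)) := by
    intro p
    rw [bandLt C p.1.val p.2.val (r i p.1) (r j p.2) hC0 (hrC i p.1) (hrC j p.2)]
    constructor
    · rintro (h | ⟨h, h2⟩)
      · exact Or.inl h
      · exact Or.inr ⟨Fin.ext h.symm, h2⟩
    · rintro (h | ⟨h, h2⟩)
      · exact Or.inl h
      · exact Or.inr ⟨(congrArg Fin.val h).symm, h2⟩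
  rw [Finset.filter_congr (fun p _ => hP p), Finset.filter_or]
  have hdisj : Disjoint
      ((univ : Finset (Fin k × Fin k)).filter (fun p => p.2.val < p.1.val))
      ((univ : Finset (Fin k × Fin k)).filter (fun p => p.1 = p.2 ∧ r j p.2 < r i p.1)) := by
    rw [Finset.disjoint_left]
    intro p h1 h2
    simp only [Finset.mem_filter] at h1 h2
    have h3 := congrArg Fin.val h2.2.1
    omega
  rw [Finset.card_union_of_disjoint hdisj]
  have hdiag : ((univ : Finset (Fin k × Fin k)).filter
      (fun p => p.1 = p.2 ∧ r j p.2 < r i p.1)).card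
      = ((univ : Finset (Fin k)).filter (fun a => r j a < r i a)).card := by
    apply Finset.card_bij (fun p _ => p.1)
    · intro p hp
      simp only [Finset.mem_filter] at hp ⊢
      refine ⟨Finset.mem_univ _, ?_⟩
      rcases hp.2 with ⟨he, hlt⟩
      rwa [← he] at hlt
    · intro p1 h1 p2 h2 he
      simp only [Finset.mem_filter] at h1 h2
      exact Prod.ext he (by rw [← h1.2.1, ← h2.2.1, he])
    · intro b hb
      simp only [Finset.mem_filter] at hb
      exact ⟨(b, b), Finset.mem_filter.mpr ⟨Finset.mem_univ _, rfl, hb.2⟩, rfl⟩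
  have hswap : ((univ : Finset (Fin k × Fin k)).filter (fun p => p.2.val < p.1.val)).card
      = ((univ : Finset (Fin k × Fin k)).filter (fun p => p.1.val < p.2.val)).card := by
    apply Finset.card_bij (fun p _ => (p.2, p.1))
    · intro p hp
      simp only [Finset.mem_filter] at hp ⊢
      exact ⟨Finset.mem_univ _, hp.2⟩
    · intro p1 h1 p2 h2 he
      have := congrArg Prod.fst he
      have := congrArg Prod.snd he
      exact Prod.ext (by simp_all) (by simp_all)
    · intro b hb
      simp only [Finset.mem_filter] at hb
      exact ⟨(b.2, b.1), Finset.mem_filter.mpr ⟨Finset.mem_univ _, hb.2⟩, rfl⟩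
  have hoff : ((univ : Finset (Fin k × Fin k)).filter (fun p => p.1 ≠ p.2)).card = k * k - k := by
    have he : ((univ : Finset (Fin k × Fin k)).filter (fun p => p.1 ≠ p.2))
        = (univ : Finset (Fin k)).offDiag := by
      ext p
      simp [Finset.mem_offDiag]
    rw [he, Finset.offDiag_card]
    simp
  have hsplit : ((univ : Finset (Fin k × Fin k)).filter (fun p => p.1 ≠ p.2))
      = ((univ : Finset (Fin k × Fin k)).filter (fun p => p.2.val < p.1.val))
        ∪ ((univ : Finset (Fin k × Fin k)).filter (fun p => p.1.val < p.2.val)) := by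
    rw [← Finset.filter_or]
    apply Finset.filter_congr
    intro p _
    rw [Ne, Fin.ext_iff]
    omega
  have hdisj2 : Disjoint
      ((univ : Finset (Fin k × Fin k)).filter (fun p => p.2.val < p.1.val))
      ((univ : Finset (Fin k × Fin k)).filter (fun p => p.1.val < p.2.val)) := by
    rw [Finset.disjoint_left]
    intro p h1 h2
    simp only [Finset.mem_filter] at h1 h2
    omega
  have h2lt : 2 * ((univ : Finset (Fin k × Fin k)).filter (fun p => p.2.val < p.1.val)).card
      = k * k - k := by
    rw [← hoff, hsplit, Finset.card_union_of_disjoint hdisj2, ← hswap]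
    ring
  have hkk : k ≤ k * k := Nat.le_mul_of_pos_left k hk0
  have hodd : k % 2 = 1 := Nat.odd_iff.mp hkodd
  have hdval := hr i j hT
  rw [hdiag, hdval, pow_two]
  omega
end

section
/- Let n ≥ 6 be an integer with n ≡ 2 (mod 4). For every tournament T on n vertices there exists a set of n dice, each with n − 1 sides, X : Fin n → Fin (n−1) → ℕ, such that for all distinct i, j, if T has an edge from i to j then the number of face wins of die X i over die X j is exactly ((n−1)² + 1)/2. -/
open Finset

namespace RoundRobinDice

lemma mul_add_lt_mul_add_iff {C a b e f : ℕ} (he : e < C) (hf : f < C) :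
    C * b + f < C * a + e ↔ b < a ∨ b = a ∧ f < e := by
  constructor
  · intro hlt
    rcases lt_trichotomy b a with h | rfl | h
    · exact .inl h
    · exact .inr ⟨rfl, by omega⟩
    · have : C * (a + 1) ≤ C * b := Nat.mul_le_mul_left C h
      linarith [Nat.mul_succ C a]
  · rintro (h | ⟨rfl, h⟩)
    · have : C * (b + 1) ≤ C * a := Nat.mul_le_mul_left C h
      linarith [Nat.mul_succ C b]
    · omega

lemma faceWins_mul_add {k C : ℕ} {ε δ : Fin k → ℕ} (hε : ∀ a, ε a < C) (hδ : ∀ a, δ a < C) :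
    faceWins k (fun a => C * a + ε a) (fun a => C * a + δ a) =
      k.choose 2 + #{a | δ a < ε a} := by
  have hsplit : (univ.filter fun p : Fin k × Fin k => C * p.1 + ε p.1 > C * p.2 + δ p.2) =
      univ.filter (fun p : Fin k × Fin k => p.2 < p.1) ∪
        univ.filter (fun p : Fin k × Fin k => p.2 = p.1 ∧ δ p.2 < ε p.1) := by
    ext ⟨a, b⟩
    simp only [mem_filter, mem_univ, true_and, mem_union, gt_iff_lt,
      mul_add_lt_mul_add_iff (hε a) (hδ b), Fin.lt_def, Fin.ext_iff]
  have hlower : #({p | p.2 < p.1} : Finset (Fin k × Fin k)) = k.choose 2 := by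
    have := Fintype.card_product_filter_lt (α := Fin k)
    rw [Fintype.card_fin] at this
    rw [← this]
    exact card_equiv (Equiv.prodComm _ _) (fun p => by simp)
  have hdiag : #({p | p.2 = p.1 ∧ δ p.2 < ε p.1} : Finset (Fin k × Fin k)) = #{a | δ a < ε a} :=
    card_nbij' Prod.fst (fun a => (a, a)) (by simp [Set.MapsTo]) (by simp [Set.MapsTo])
      (by rintro ⟨a, b⟩ h; simp_all) (by simp [Set.RightInvOn, Set.LeftInvOn])
  rw [faceWins, hsplit, card_union_of_disjoint, hlower, hdiag]
  exact disjoint_filter.2 fun p _ h h' => h.ne h'.1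

section Rank

variable {V R : Type*} [Fintype R] [DecidableEq R]

def rank (Q : V → R → ℕ) (p : R → V → V) (T : V → V → Prop) [DecidableRel T] (r : R) (i : V) :
    ℕ :=
  2 * Q i r + if T i (p r i) then 1 else 0

lemma card_rank_lt_rank (Q : V → R → ℕ) (p : R → V → V) (T : V → V → Prop) [DecidableRel T]
    {u v : V} {L : R} (hL : ∀ r, Q u r = Q v r ↔ r = L) (hpu : p L u = v) (hpv : p L v = u)
    (huv : T u v) (hvu : ¬ T v u) :
    #{r | rank Q p T r v < rank Q p T r u} = #{r | Q v r < Q u r} + 1 := by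
  have hQL := (hL L).2 rfl
  have hsplit : univ.filter (fun r => rank Q p T r v < rank Q p T r u) =
      insert L (univ.filter fun r => Q v r < Q u r) := by
    ext r
    rcases eq_or_ne r L with rfl | hr
    · simp only [mem_filter, mem_univ, true_and, mem_insert_self, iff_true]
      simp [rank, hpu, hpv, huv, hvu, hQL]
    · have := (hL r).not.2 hr
      simp only [mem_filter, mem_univ, true_and, mem_insert, hr, false_or]
      unfold rank
      split_ifs <;> omega
  rw [hsplit, card_insert_of_notMem (by simp [hQL])]

end Rank

lemma card_natAbs_valMinAbs_le {m s : ℕ} [NeZero m] (hs : 2 * s < m) :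
    #{z : ZMod m | z.valMinAbs.natAbs ≤ s} = 2 * s + 1 := by
  have hspec : ∀ k : ℤ, k.natAbs ≤ s → (k : ZMod m).valMinAbs = k := fun k hk =>
    (ZMod.valMinAbs_spec _ k).2 ⟨rfl, by constructor <;> omega⟩
  calc #{z : ZMod m | z.valMinAbs.natAbs ≤ s} = #(Icc (-s : ℤ) s) := by
        refine card_nbij' ZMod.valMinAbs (fun k : ℤ => (k : ZMod m)) ?_ ?_ ?_ ?_
        · intro z hz
          simp only [coe_filter, mem_univ, true_and, Set.mem_ofPred_eq] at hz
          simp only [coe_Icc, Set.mem_Icc]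
          omega
        · intro k hk
          simp only [coe_Icc, Set.mem_Icc] at hk
          simp only [coe_filter, mem_univ, true_and, Set.mem_ofPred_eq]
          rw [hspec k (by omega)]
          omega
        · exact fun z _ => ZMod.coe_valMinAbs z
        · intro k hk
          simp only [coe_Icc, Set.mem_Icc] at hk
          exact hspec k (by omega)
    _ = 2 * s + 1 := by rw [Int.card_Icc]; omega

def partner {R : Type*} [Ring R] [DecidableEq R] (r : R) : Option R → Option R
  | none => some r
  | some x => if x = r then none else some (2 * r - x)

section Schedule

variable (t : ℕ)

def pairLevel (z : ZMod (4 * t + 1)) : ℕ :=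
  if z = 0 then 2 * t + 1 else 2 * z.valMinAbs.natAbs

lemma pairLevel_neg (z : ZMod (4 * t + 1)) : pairLevel t (-z) = pairLevel t z := by
  simp [pairLevel]

lemma pairLevel_eq_pairLevel_iff {z w : ZMod (4 * t + 1)} :
    pairLevel t z = pairLevel t w ↔ z = w ∨ z = -w := by
  rcases eq_or_ne z 0 with rfl | hz <;> rcases eq_or_ne w 0 with rfl | hw
  · simp
  · simp only [pairLevel, hw, ↓reduceIte, eq_comm (a := (0 : ZMod _)), neg_eq_zero, or_self,
      iff_false]
    omega
  · simp only [pairLevel, hz, ↓reduceIte, neg_zero, or_self, iff_false]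
    omega
  · simp only [pairLevel, hz, hw, ↓reduceIte, Nat.mul_left_cancel_iff two_pos,
      ZMod.natAbs_valMinAbs_eq_natAbs_valMinAbs]

lemma pairLevel_le (z : ZMod (4 * t + 1)) : pairLevel t z ≤ 4 * t + 1 := by
  have := ZMod.natAbs_valMinAbs_le z
  unfold pairLevel
  split_ifs <;> omega

lemma card_pairLevel_lt : #{z | pairLevel t z < 2 * t + 1} = 2 * t := by
  have : ({z | pairLevel t z < 2 * t + 1} : Finset (ZMod (4 * t + 1))) =
      (univ.filter fun z : ZMod (4 * t + 1) => z.valMinAbs.natAbs ≤ t).erase 0 := by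
    ext z
    rcases eq_or_ne z 0 with rfl | hz
    · simp [pairLevel]
    · simp only [mem_filter, mem_univ, true_and, mem_erase, hz, ne_eq, not_false_eq_true]
      simp only [pairLevel, hz, ↓reduceIte]
      omega
  rw [this, card_erase_of_mem (by simp), card_natAbs_valMinAbs_le (by omega)]
  omega

lemma card_lt_pairLevel : #{z | 2 * t + 1 < pairLevel t z} = 2 * t := by
  have : ({z | 2 * t + 1 < pairLevel t z} : Finset (ZMod (4 * t + 1))) =
      univ.filter fun z : ZMod (4 * t + 1) => ¬ z.valMinAbs.natAbs ≤ t := by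
    ext z
    rcases eq_or_ne z 0 with rfl | hz
    · simp only [mem_filter, mem_univ, true_and]
      simp [pairLevel]
    · simp only [mem_filter, mem_univ, true_and]
      simp only [pairLevel, hz, ↓reduceIte]
      omega
  have htotal := card_filter_add_card_filter_not (s := univ)
    fun z : ZMod (4 * t + 1) => z.valMinAbs.natAbs ≤ t
  rw [card_natAbs_valMinAbs_le (by omega), card_univ, ZMod.card] at htotal
  rw [this]
  omega

lemma two_mul_two_mul_add_one : (2 : ZMod (4 * t + 1)) * (2 * t + 1) = 1 := by
  have h : ((4 * t + 1 : ℕ) : ZMod (4 * t + 1)) = 0 := ZMod.natCast_self _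
  push_cast at h
  linear_combination h

/-- In round `r`, the vertex `some x` belongs to the pair `{r + z, r - z}` with `z = x - r`, and
`none` (that is, `∞`) to the pair `{r, ∞}`, which is indexed by `z = 0`. -/
def level : Option (ZMod (4 * t + 1)) → ZMod (4 * t + 1) → ℕ
  | none, _ => pairLevel t 0
  | some x, r => pairLevel t (x - r)

lemma level_none (r : ZMod (4 * t + 1)) : level t none r = 2 * t + 1 := by
  simp [level, pairLevel]

lemma level_le (i : Option (ZMod (4 * t + 1))) (r : ZMod (4 * t + 1)) :
    level t i r ≤ 4 * t + 1 := by
  cases i <;> exact pairLevel_le t _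

lemma exists_level_eq_level_iff {u v : Option (ZMod (4 * t + 1))} (huv : u ≠ v) :
    ∃ L, ∀ r, level t u r = level t v r ↔ r = L := by
  have hinf : ∀ y r, level t none r = level t (some y) r ↔ r = y := fun y r => by
    simp only [level, pairLevel_eq_pairLevel_iff, eq_comm (a := (0 : ZMod _)), neg_eq_zero,
      sub_eq_zero, eq_comm (a := y), or_self]
  match u, v, huv with
  | none, none, h => exact absurd rfl h
  | none, some y, _ => exact ⟨y, hinf y⟩
  | some x, none, _ => exact ⟨x, fun r => eq_comm.trans (hinf x r)⟩
  | some x, some y, h =>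
    have hxy : x ≠ y := fun hxy => h (congrArg some hxy)
    -- `2t + 1` is the inverse of `2`, so this is the round `(x + y) / 2`.
    refine ⟨(2 * t + 1) * (x + y), fun r => ?_⟩
    have := two_mul_two_mul_add_one t
    simp only [level, pairLevel_eq_pairLevel_iff, sub_left_inj, hxy, false_or]
    constructor
    · intro h
      linear_combination (-(2 * t + 1) : ZMod (4 * t + 1)) * h - r * this
    · rintro rfl
      linear_combination (-(x + y)) * this

lemma partner_eq_of_level_eq {i j : Option (ZMod (4 * t + 1))} {r : ZMod (4 * t + 1)}
    (hij : i ≠ j) (h : level t i r = level t j r) : partner r i = j := by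
  match i, j, hij with
  | none, none, hij => exact absurd rfl hij
  | none, some y, _ =>
    simp only [level, pairLevel_eq_pairLevel_iff, eq_comm (a := (0 : ZMod _)), neg_eq_zero,
      sub_eq_zero, or_self] at h
    simp [partner, h]
  | some x, none, _ =>
    simp only [level, pairLevel_eq_pairLevel_iff, neg_zero, sub_eq_zero, or_self] at h
    simp [partner, h]
  | some x, some y, hij =>
    have hxy : x ≠ y := fun hxy => hij (congrArg some hxy)
    simp only [level, pairLevel_eq_pairLevel_iff, sub_left_inj, hxy, false_or] at h
    have hxr : x ≠ r := by
      rintro rfl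
      exact hxy (by linear_combination -h)
    simp only [partner, hxr, if_false, Option.some.injEq]
    linear_combination -h

lemma card_level_lt_level {u v : Option (ZMod (4 * t + 1))} (huv : u ≠ v) :
    #{r | level t v r < level t u r} = 2 * t := by
  match u, v, huv with
  | none, none, h => exact absurd rfl h
  | none, some y, _ =>
    rw [← card_pairLevel_lt t]
    exact card_equiv (Equiv.subLeft y) fun r => by
      simp only [mem_filter, mem_univ, true_and, Equiv.subLeft_apply, level_none]
      simp only [level]
  | some x, none, _ =>
    rw [← card_lt_pairLevel t]
    exact card_equiv (Equiv.subLeft x) fun r => by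
      simp only [mem_filter, mem_univ, true_and, Equiv.subLeft_apply, level_none]
      simp only [level]
  | some x, some y, h =>
    obtain ⟨L, hL⟩ := exists_level_eq_level_iff t h
    have hswap : #{r | level t (some y) r < level t (some x) r} =
        #{r | level t (some x) r < level t (some y) r} :=
      card_equiv (Equiv.subLeft (x + y)) fun r => by
        simp only [mem_filter, mem_univ, true_and, Equiv.subLeft_apply]
        simp only [level]
        rw [show x - (x + y - r) = -(y - r) by ring, show y - (x + y - r) = -(x - r) by ring,
          pairLevel_neg, pairLevel_neg]
    have hne : #{r | level t (some x) r ≠ level t (some y) r} =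
        #{r | level t (some y) r < level t (some x) r} +
          #{r | level t (some x) r < level t (some y) r} := by
      rw [← card_union_of_disjoint (disjoint_filter.2 fun r _ h h' => h.asymm h'), ← filter_or]
      congr 1
      ext r
      simp only [mem_filter, mem_univ, true_and]
      omega
    have hone : #{r | level t (some x) r = level t (some y) r} = 1 := by
      rw [filter_congr fun r _ => hL r, filter_eq', if_pos (mem_univ L), card_singleton]
    have htotal := card_filter_add_card_filter_not (s := univ)
      fun r => level t (some x) r = level t (some y) r
    rw [hone, hne, card_univ, ZMod.card] at htotal
    omega

end Schedule

lemma exists_balanced_dice {t : ℕ}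
    (T : Option (ZMod (4 * t + 1)) → Option (ZMod (4 * t + 1)) → Prop)
    (hT : ∀ u v, u ≠ v → T u v → ¬ T v u) :
    ∃ X : Option (ZMod (4 * t + 1)) → Fin (4 * t + 1) → ℕ, ∀ u v, u ≠ v → T u v →
      2 * faceWins (4 * t + 1) (X u) (X v) = (4 * t + 1) ^ 2 + 1 := by
  classical
  let ε (u : Option (ZMod (4 * t + 1))) (a : Fin (4 * t + 1)) : ℕ :=
    rank (level t) partner T (ZMod.finEquiv _ a) u
  have hε : ∀ u a, ε u a < 8 * t + 4 := fun u a => by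
    have := level_le t u (ZMod.finEquiv _ a)
    simp only [ε, rank]
    split_ifs <;> omega
  refine ⟨fun u a => (8 * t + 4) * a + ε u a, fun u v huv huvT => ?_⟩
  obtain ⟨L, hL⟩ := exists_level_eq_level_iff t huv
  have hLu := partner_eq_of_level_eq t huv ((hL L).2 rfl)
  have hLv := partner_eq_of_level_eq t huv.symm ((hL L).2 rfl).symm
  have hwins : #{a | ε v a < ε u a} = 2 * t + 1 := calc
    _ = #{r | rank (level t) partner T r v < rank (level t) partner T r u} :=
      card_equiv (ZMod.finEquiv _).toEquiv fun a => by simp [ε]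
    _ = #{r | level t v r < level t u r} + 1 :=
      card_rank_lt_rank _ _ _ hL hLu hLv huvT (hT u v huv huvT)
    _ = 2 * t + 1 := by rw [card_level_lt_level t huv]
  rw [faceWins_mul_add (hε u) (hε v), hwins, Nat.choose_two_right, Nat.add_sub_cancel,
    Nat.mul_div_assoc _ (by omega : 2 ∣ 4 * t), show 4 * t / 2 = 2 * t by omega]
  ring

end RoundRobinDice

open RoundRobinDice in
theorem tournament_realized_by_balanced_dice_two_mod_four_general (n : ℕ)
    (hmod : n % 4 = 2)
    (T : Fin n → Fin n → Prop)
    (htot : ∀ i j : Fin n, i ≠ j → (T i j ↔ ¬ T j i)) :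
    ∃ X : Fin n → Fin (n - 1) → ℕ,
      ∀ i j : Fin n, i ≠ j → T i j →
        2 * faceWins (n - 1) (X i) (X j) = (n - 1) ^ 2 + 1 := by
  obtain ⟨t, rfl⟩ : ∃ t, n = 4 * t + 2 := ⟨n / 4, by omega⟩
  let e : Fin (4 * t + 2) ≃ Option (ZMod (4 * t + 1)) := Fintype.equivOfCardEq (by simp)
  obtain ⟨X, hX⟩ := exists_balanced_dice (fun u v => T (e.symm u) (e.symm v)) fun u v huv =>
    (htot _ _ (e.symm.injective.ne huv)).1
  exact ⟨fun i => X (e i), fun i j hij hT =>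
    hX (e i) (e j) (e.injective.ne hij) (by simpa using hT)⟩

/-- For `n ≥ 6` with `n ≡ 2 (mod 4)`, every tournament on `n` vertices is realized by `n`
dice with `n - 1` sides, where every edge of the tournament is won with face-win count
exactly `((n-1)² + 1)/2`. -/
theorem tournament_realized_by_balanced_dice_two_mod_four (n : ℕ) (hn : 6 ≤ n)
    (hmod : n % 4 = 2)
    (T : Fin n → Fin n → Prop)
    (hirr : ∀ i, ¬ T i i)
    (htot : ∀ i j : Fin n, i ≠ j → (T i j ↔ ¬ T j i)) :
    ∃ X : Fin n → Fin (n - 1) → ℕ,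
      ∀ i j : Fin n, i ≠ j → T i j →
        2 * faceWins (n - 1) (X i) (X j) = (n - 1) ^ 2 + 1 :=
  tournament_realized_by_balanced_dice_two_mod_four_general n hmod T htot
end

section
/- Let n ≥ 3 be an odd integer and let E be the set of all unordered pairs of distinct elements of Fin n (the edge set of the complete graph K_n). Then there is a partition of E into n sets, each of size (n − 1)/2, such that within each set no two pairs share an element (each set is a matching). -/
/-- For `n ≥ 3` odd, the edge set of the complete graph `K_n` can be partitioned into `n`
matchings, each of size `(n - 1)/2`. -/
theorem complete_graph_partition_odd (n : ℕ) (hn : 3 ≤ n) (hodd : Odd n) :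
    ∃ Y : Fin n → Finset (Sym2 (Fin n)),
      (∀ i, (Y i).card = (n - 1) / 2) ∧
      (∀ i, ∀ e ∈ Y i, ¬ e.IsDiag) ∧
      (∀ e : Sym2 (Fin n), ¬ e.IsDiag → ∃! i : Fin n, e ∈ Y i) ∧
      (∀ i, ∀ e ∈ Y i, ∀ f ∈ Y i, e ≠ f → ∀ v : Fin n, ¬(v ∈ e ∧ v ∈ f)) := by
  haveI : NeZero n := ⟨by omega⟩
  -- doubling is injective
  have hinj : Function.Injective (fun i : Fin n => i + i) := by
    intro i j h
    simp only at h
    have h' : (i.val + i.val) % n = (j.val + j.val) % n := by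
      have := congrArg Fin.val h
      simpa [Fin.val_add] using this
    have hco : Nat.gcd n 2 = 1 := Nat.coprime_two_right.mpr hodd
    have hmod : 2 * i.val ≡ 2 * j.val [MOD n] := by
      show 2 * i.val % n = 2 * j.val % n
      rw [two_mul, two_mul]
      exact h'
    have h2 := Nat.ModEq.cancel_left_of_coprime hco hmod
    exact Fin.ext (by
      have h3 : i.val % n = j.val % n := h2
      simpa [Nat.mod_eq_of_lt i.isLt, Nat.mod_eq_of_lt j.isLt] using h3)
  have hsurj : Function.Surjective (fun i : Fin n => i + i) :=
    Finite.injective_iff_surjective.mp hinj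
  set sumE : Sym2 (Fin n) → Fin n := Sym2.lift ⟨fun a b => a + b, fun a b => add_comm a b⟩
    with hsumE
  have hsum : ∀ a b : Fin n, sumE s(a, b) = a + b := fun a b => rfl
  set Y : Fin n → Finset (Sym2 (Fin n)) :=
    fun i => Finset.univ.filter (fun e => ¬ e.IsDiag ∧ sumE e = i + i) with hY
  have hmem : ∀ i e, e ∈ Y i ↔ ¬ e.IsDiag ∧ sumE e = i + i := by
    intro i e; simp [hY]
  refine ⟨Y, ?_, ?_, ?_, ?_⟩
  · -- cardinality
    intro i
    set S : Finset (Fin n) := Finset.univ.erase i with hS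
    have hcardS : S.card = n - 1 := by
      simp [hS, Finset.card_erase_of_mem]
    set g : Fin n → Sym2 (Fin n) := fun a => s(a, (i + i) - a) with hg
    have hgmem : ∀ a ∈ S, g a ∈ Y i := by
      intro a ha
      rw [hmem]
      constructor
      · intro hdiag
        have h1 : a = (i + i) - a := Sym2.mk_isDiag_iff.mp hdiag
        exact (Finset.mem_erase.mp ha).1 (hinj (eq_sub_iff_add_eq.mp h1))
      · show a + ((i + i) - a) = i + i
        abel
    have hcount := Finset.card_eq_sum_card_fiberwise hgmem
    have hfiber : ∀ e ∈ Y i, (S.filter (fun a => g a = e)).card = 2 := by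
      intro e he
      induction e using Sym2.inductionOn with
      | hf a b =>
        rw [hmem] at he
        obtain ⟨hd, hs⟩ := he
        have hab : a ≠ b := by simpa using hd
        have hsum' : a + b = i + i := hs
        have hai : a ≠ i := by
          intro h; subst h
          have : b = a := by
            have : a + a = a + b := by rw [hsum']
            exact (add_left_cancel this).symm
          exact hab this.symm
        have hbi : b ≠ i := by
          intro h; subst h
          have : a = b := by
            have : b + b = a + b := by rw [hsum']
            have := add_right_cancel this
            exact this.symm
          exact hab this
        have : S.filter (fun a' => g a' = s(a, b)) = {a, b} := by
          ext x
          simp only [Finset.mem_filter, Finset.mem_insert, Finset.mem_singleton, hS,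
            Finset.mem_erase, Finset.mem_univ, and_true, hg]
          constructor
          · rintro ⟨-, hx⟩
            rcases Sym2.eq_iff.mp hx with ⟨h1, -⟩ | ⟨h1, -⟩
            · exact Or.inl h1
            · exact Or.inr h1
          · rintro (rfl | rfl)
            · refine ⟨hai, ?_⟩
              have h3 : (i + i) - x = b := by rw [← hsum', add_sub_cancel_left]
              rw [h3]
            · refine ⟨hbi, ?_⟩
              have h3 : (i + i) - x = a := by
                rw [← hsum', add_comm, add_sub_cancel_left]
              rw [h3, Sym2.eq_swap]
        rw [this, Finset.card_insert_of_notMem (by simpa using hab), Finset.card_singleton]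
    rw [Finset.sum_congr rfl hfiber, Finset.sum_const, smul_eq_mul, hcardS] at hcount
    omega
  · intro i e he
    exact ((hmem i e).mp he).1
  · intro e he
    induction e using Sym2.inductionOn with
    | hf a b =>
      obtain ⟨i, hi⟩ := hsurj (a + b)
      refine ⟨i, (hmem i _).mpr ⟨he, hi.symm⟩, ?_⟩
      intro j hj
      have h4 := ((hmem j _).mp hj).2
      refine hinj ?_
      show j + j = i + i
      rw [← h4]
      exact hi.symm
  · rintro i e he f hf hne v ⟨hv, hv'⟩
    obtain ⟨w, rfl⟩ := Sym2.mem_iff_exists.mp hv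
    obtain ⟨w', rfl⟩ := Sym2.mem_iff_exists.mp hv'
    have h1 : v + w = i + i := ((hmem i _).mp he).2
    have h2 : v + w' = i + i := ((hmem i _).mp hf).2
    have : w = w' := add_left_cancel (h1.trans h2.symm)
    exact hne (by rw [this])
end

section
/- Let n ≥ 2 be an even integer and let E be the set of all unordered pairs of distinct elements of Fin n (the edge set of the complete graph K_n). Then there is a partition of E into n − 1 sets, each of size n/2, such that within each set no two pairs share an element (each set is a perfect matching). -/
/-!
Round-robin construction. Write `n = m + 1` with `m` odd and take as vertices `ZMod m` together
with one extra point `∞` (`Option (ZMod m)`). In round `i : ZMod m`, pair `∞` with `i` and every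
other `x` with its reflection `2 * i - x`. As `2` is invertible modulo `m`, each round is a
fixed-point-free involution, and two distinct vertices `x, y` meet in exactly one round:
`i = (x + y) / 2`, or `i = y` when `x = ∞`. The pairs `{v, σ v}` of a fixed-point-free
involution `σ` form a perfect matching.
-/

open Finset Function

structure IsPairingFamily {ι V : Type*} (σ : ι → V → V) : Prop where
  involutive : ∀ i, Involutive (σ i)
  ne_self : ∀ i v, σ i v ≠ v
  existsUnique : ∀ a b, a ≠ b → ∃! i, σ i a = b

theorem IsPairingFamily.conj {ι κ V W : Type*} {σ : ι → V → V} (h : IsPairingFamily σ)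
    (e : V ≃ W) (f : κ ≃ ι) : IsPairingFamily fun k => e ∘ σ (f k) ∘ e.symm where
  involutive k w := by simp [h.involutive (f k) (e.symm w)]
  ne_self k w := by simpa [← Equiv.eq_symm_apply] using h.ne_self (f k) (e.symm w)
  existsUnique a b hab := by
    simpa [← Equiv.eq_symm_apply, f.existsUnique_congr_left] using
      h.existsUnique (e.symm a) (e.symm b) (by simpa using hab)

section PairingEdges

variable {V : Type*} [Fintype V] [DecidableEq V] {τ : V → V}

def pairingEdges (τ : V → V) : Finset (Sym2 V) := univ.image fun v => s(v, τ v)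

theorem mk_mem_pairingEdges_iff (hτ : Involutive τ) {a b : V} :
    s(a, b) ∈ pairingEdges τ ↔ τ a = b := by
  simp only [pairingEdges, mem_image, mem_univ, true_and, Sym2.eq_iff]
  constructor
  · rintro ⟨v, ⟨rfl, rfl⟩ | ⟨rfl, rfl⟩⟩
    · rfl
    · exact hτ v
  · rintro rfl
    exact ⟨a, .inl ⟨rfl, rfl⟩⟩

theorem eq_mk_of_mem_pairingEdges (hτ : Involutive τ) {e : Sym2 V} (he : e ∈ pairingEdges τ)
    {v : V} (hv : v ∈ e) : e = s(v, τ v) := by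
  obtain ⟨w, rfl⟩ := Sym2.mem_iff_exists.mp hv
  rw [(mk_mem_pairingEdges_iff hτ).mp he]

theorem eq_of_mem_pairingEdges (hτ : Involutive τ) {e f : Sym2 V} (he : e ∈ pairingEdges τ)
    (hf : f ∈ pairingEdges τ) {v : V} (hve : v ∈ e) (hvf : v ∈ f) : e = f :=
  (eq_mk_of_mem_pairingEdges hτ he hve).trans (eq_mk_of_mem_pairingEdges hτ hf hvf).symm

theorem not_isDiag_of_mem_pairingEdges (hτ : ∀ v, τ v ≠ v) {e : Sym2 V}
    (he : e ∈ pairingEdges τ) : ¬e.IsDiag := by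
  obtain ⟨v, -, rfl⟩ := mem_image.mp he
  exact fun h => hτ v (Sym2.mk_isDiag_iff.mp h).symm

theorem two_mul_card_pairingEdges (hτ : Involutive τ) (hfix : ∀ v, τ v ≠ v) :
    2 * #(pairingEdges τ) = Fintype.card V := by
  rw [← card_univ (α := V), card_eq_sum_card_image (fun v => s(v, τ v)), mul_comm, ← smul_eq_mul,
    ← sum_const]
  refine sum_congr rfl fun e he => ?_
  have fiber : {v ∈ (univ : Finset V) | s(v, τ v) = e} = e.toFinset := by
    ext v
    simp only [mem_filter, mem_univ, true_and, Sym2.mem_toFinset]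
    exact ⟨fun h => h ▸ Sym2.mem_mk_left _ _, fun hv => (eq_mk_of_mem_pairingEdges hτ he hv).symm⟩
  rw [fiber, Sym2.card_toFinset_of_not_isDiag _ (not_isDiag_of_mem_pairingEdges hfix he)]

theorem IsPairingFamily.existsUnique_mem_pairingEdges {ι : Type*} {σ : ι → V → V}
    (h : IsPairingFamily σ) {e : Sym2 V} (he : ¬e.IsDiag) : ∃! i, e ∈ pairingEdges (σ i) := by
  induction e using Sym2.ind with
  | _ a b =>
    simpa only [mk_mem_pairingEdges_iff (h.involutive _)] using
      h.existsUnique a b (Sym2.mk_isDiag_iff.not.mp he)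

end PairingEdges

section RoundRobin

variable {R : Type*} [CommRing R] [DecidableEq R]

def roundRobin (i : R) : Option R → Option R
  | none => some i
  | some x => if x = i then none else some (2 * i - x)

theorem roundRobin_involutive (i : R) : Involutive (roundRobin i) := by
  rintro (_ | x)
  · simp [roundRobin]
  · by_cases hx : x = i
    · simp [roundRobin, hx]
    · have : 2 * i - x ≠ i := fun h => hx (by linear_combination -h)
      simp [roundRobin, hx, this]

theorem roundRobin_ne_self (h2 : IsUnit (2 : R)) (i : R) (a : Option R) : roundRobin i a ≠ a := by
  rcases a with _ | x
  · simp [roundRobin]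
  · by_cases hx : x = i
    · simp [roundRobin, hx]
    · simp only [roundRobin, hx, if_false, ne_eq, Option.some.injEq]
      exact fun h => hx (h2.mul_left_cancel (by linear_combination h)).symm

theorem eq_of_roundRobin_eq (h2 : IsUnit (2 : R)) {i j : R} {a : Option R}
    (h : roundRobin i a = roundRobin j a) : i = j := by
  rcases a with _ | x
  · simpa [roundRobin] using h
  · by_cases hi : x = i
    · by_cases hj : x = j
      · exact hi.symm.trans hj
      · subst hi
        simp [roundRobin, hj] at h
    · by_cases hj : x = j
      · subst hj
        simp [roundRobin, hi] at h
      · simp only [roundRobin, hi, hj, if_false, Option.some.injEq, sub_left_inj] at h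
        exact h2.mul_left_cancel h

theorem exists_roundRobin_eq (h2 : IsUnit (2 : R)) {a b : Option R} (hab : a ≠ b) :
    ∃ i, roundRobin i a = b := by
  rcases a with _ | x <;> rcases b with _ | y
  · exact absurd rfl hab
  · exact ⟨y, rfl⟩
  · exact ⟨x, by simp [roundRobin]⟩
  · obtain ⟨i, hi⟩ : ∃ i, 2 * i = x + y :=
      ⟨↑h2.unit⁻¹ * (x + y), by rw [← mul_assoc, h2.mul_val_inv, one_mul]⟩
    have hxi : x ≠ i := by
      rintro rfl
      exact hab (congrArg some (by linear_combination hi))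
    exact ⟨i, by simp only [roundRobin, hxi, if_false, Option.some.injEq]; linear_combination hi⟩

theorem isPairingFamily_roundRobin (h2 : IsUnit (2 : R)) :
    IsPairingFamily (roundRobin (R := R)) where
  involutive := roundRobin_involutive
  ne_self := roundRobin_ne_self h2
  existsUnique a b hab := by
    obtain ⟨i, hi⟩ := exists_roundRobin_eq h2 hab
    exact ⟨i, hi, fun j hj => eq_of_roundRobin_eq h2 (hj.trans hi.symm)⟩

end RoundRobin

theorem exists_isPairingFamily_fin {n : ℕ} (hn : 2 ≤ n) (heven : Even n) :
    ∃ σ : Fin (n - 1) → Fin n → Fin n, IsPairingFamily σ := by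
  have : NeZero (n - 1) := ⟨by omega⟩
  have hodd : Odd (n - 1) := by
    obtain ⟨k, hk⟩ := heven
    exact ⟨k - 1, by omega⟩
  have h2 : IsUnit (2 : ZMod (n - 1)) := by
    exact_mod_cast (ZMod.isUnit_iff_coprime 2 (n - 1)).mpr (Nat.coprime_two_left.mpr hodd)
  have e : Option (ZMod (n - 1)) ≃ Fin n :=
    Fintype.equivFinOfCardEq (by rw [Fintype.card_option, ZMod.card]; omega)
  exact ⟨_, (isPairingFamily_roundRobin h2).conj e (ZMod.finEquiv (n - 1)).toEquiv⟩

/-- For `n ≥ 2` even, the edge set of the complete graph `K_n` can be partitioned into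
`n - 1` perfect matchings, each of size `n/2`. -/
theorem complete_graph_partition_even (n : ℕ) (hn : 2 ≤ n) (heven : Even n) :
    ∃ Y : Fin (n - 1) → Finset (Sym2 (Fin n)),
      (∀ i, (Y i).card = n / 2) ∧
      (∀ i, ∀ e ∈ Y i, ¬ e.IsDiag) ∧
      (∀ e : Sym2 (Fin n), ¬ e.IsDiag → ∃! i : Fin (n - 1), e ∈ Y i) ∧
      (∀ i, ∀ e ∈ Y i, ∀ f ∈ Y i, e ≠ f → ∀ v : Fin n, ¬(v ∈ e ∧ v ∈ f)) := by
  obtain ⟨σ, hσ⟩ := exists_isPairingFamily_fin hn heven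
  refine ⟨fun i => pairingEdges (σ i), fun i => ?_,
    fun i _ he => not_isDiag_of_mem_pairingEdges (hσ.ne_self i) he,
    fun _ he => hσ.existsUnique_mem_pairingEdges he,
    fun i _ he _ hf hef v hv => hef (eq_of_mem_pairingEdges (hσ.involutive i) he hf hv.1 hv.2)⟩
  have := two_mul_card_pairingEdges (hσ.involutive i) (hσ.ne_self i)
  rw [Fintype.card_fin] at this
  change #(pairingEdges (σ i)) = n / 2
  omega
end

section
/- Let n ≥ 3 be an odd integer and define the circular distance d(a, b) between a, b ∈ ZMod n as the minimum of the canonical representatives of a − b and b − a (an integer between 0 and (n−1)/2). Then for any two distinct w, x ∈ ZMod n, the number of elements i ∈ ZMod n with i ≠ w, i ≠ x, and d(w, i) < d(x, i) is exactly (n − 3)/2; likewise the number with d(x, i) < d(w, i) is exactly (n − 3)/2. -/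
/-- The circular distance between `a` and `b` in `ZMod n`: the minimum of the canonical
representatives of `a - b` and `b - a`. -/
def circDist (n : ℕ) (a b : ZMod n) : ℕ := min (a - b).val (b - a).val

/-- For `n ≥ 3` odd and distinct `w, x ∈ ZMod n`, exactly `(n - 3)/2` of the elements
`i ∉ {w, x}` are strictly closer to `w` than to `x`, and likewise exactly `(n - 3)/2`
are strictly closer to `x` than to `w`. -/
theorem circDist_closer_count (n : ℕ) (hn : 3 ≤ n) (hodd : Odd n)
    (w x : ZMod n) (hwx : w ≠ x) :
    {i : ZMod n | i ≠ w ∧ i ≠ x ∧ circDist n w i < circDist n x i}.ncard = (n - 3) / 2 ∧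
    {i : ZMod n | i ≠ w ∧ i ≠ x ∧ circDist n x i < circDist n w i}.ncard = (n - 3) / 2 := by
  have hnz : NeZero n := ⟨by omega⟩
  set A := {i : ZMod n | i ≠ w ∧ i ≠ x ∧ circDist n w i < circDist n x i} with hA
  set B := {i : ZMod n | i ≠ w ∧ i ≠ x ∧ circDist n x i < circDist n w i} with hB
  -- 2 is a unit
  have h2 : IsUnit (2 : ZMod n) := by
    have : IsUnit ((2 : ℕ) : ZMod n) :=
      (ZMod.isUnit_iff_coprime 2 n).2 (Nat.coprime_two_left.2 hodd)
    simpa using this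
  have cancel2 : ∀ i j : ZMod n, 2 * i = 2 * j → i = j := fun i j h =>
    h2.mul_left_cancel h
  -- the midpoint
  have h2inv : (2 : ZMod n) * ↑h2.unit⁻¹ = 1 := h2.mul_val_inv
  obtain ⟨m, hm⟩ : ∃ m : ZMod n, 2 * m = w + x :=
    ⟨↑h2.unit⁻¹ * (w + x), by rw [← mul_assoc, h2inv, one_mul]⟩
  have hmw : m ≠ w := by
    intro h; exact hwx (cancel2 w x (by linear_combination 2 * hm - 4 * h))
  have hmx : m ≠ x := by
    intro h; exact hwx (cancel2 w x (by linear_combination 4 * h - 2 * hm))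
  -- tie characterization
  have tie_iff : ∀ i : ZMod n, circDist n w i = circDist n x i ↔ 2 * i = w + x := by
    intro i
    constructor
    · intro h
      unfold circDist at h
      rcases min_cases (w - i).val (i - w).val with ⟨h1, _⟩ | ⟨h1, _⟩ <;>
        rcases min_cases (x - i).val (i - x).val with ⟨h2', _⟩ | ⟨h2', _⟩ <;>
        rw [h1, h2'] at h <;>
        have h' := ZMod.val_injective n h
      · exact absurd (by linear_combination h') hwx
      · linear_combination -h'
      · linear_combination h'
      · exact absurd (by linear_combination -h') hwx
    · intro h
      unfold circDist
      rw [show w - i = i - x from by linear_combination -h,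
        show i - w = x - i from by linear_combination h]
      exact min_comm _ _
  -- the "strict" region S
  set S := {i : ZMod n | i ≠ w ∧ i ≠ x} with hS
  have hScard : S.ncard = n - 2 := by
    have hcompl : Sᶜ = {w, x} := by
      ext i
      simp only [hS, Set.mem_compl_iff, Set.mem_setOf_eq, Set.mem_insert_iff,
        Set.mem_singleton_iff, not_and_or, not_not]
    have := Set.ncard_add_ncard_compl S
    rw [hcompl, Set.ncard_pair hwx, Nat.card_zmod] at this
    omega
  -- partition
  have hunion : S = A ∪ B ∪ {m} := by
    ext i
    constructor
    · rintro ⟨hiw, hix⟩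
      rcases lt_trichotomy (circDist n w i) (circDist n x i) with h | h | h
      · exact Or.inl (Or.inl ⟨hiw, hix, h⟩)
      · exact Or.inr (cancel2 i m (by rw [hm]; exact (tie_iff i).1 h))
      · exact Or.inl (Or.inr ⟨hiw, hix, h⟩)
    · rintro ((⟨h1, h2, _⟩ | ⟨h1, h2, _⟩) | h)
      · exact ⟨h1, h2⟩
      · exact ⟨h1, h2⟩
      · rw [Set.mem_singleton_iff] at h; subst h; exact ⟨hmw, hmx⟩
  have hdAB : Disjoint A B := by
    rw [Set.disjoint_left]
    rintro i ⟨_, _, h⟩ ⟨_, _, h'⟩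
    exact absurd (h.trans h') (lt_irrefl _)
  have hdABm : Disjoint (A ∪ B) {m} := by
    rw [Set.disjoint_right]
    rintro i hi
    rw [Set.mem_singleton_iff] at hi; subst hi
    have htie : circDist n w i = circDist n x i := (tie_iff i).2 hm
    rintro (⟨_, _, h⟩ | ⟨_, _, h⟩) <;> omega
  -- A and B have the same size via reflection
  have hrefl1 : ∀ i : ZMod n, circDist n w (w + x - i) = circDist n x i := by
    intro i
    unfold circDist
    rw [show w - (w + x - i) = i - x from by ring, show w + x - i - w = x - i from by ring]
    exact min_comm _ _
  have hrefl2 : ∀ i : ZMod n, circDist n x (w + x - i) = circDist n w i := by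
    intro i
    unfold circDist
    rw [show x - (w + x - i) = i - w from by ring, show w + x - i - x = w - i from by ring]
    exact min_comm _ _
  have hinj : Function.Injective (fun i : ZMod n => w + x - i) := by
    intro i j h
    simpa using neg_injective (show -i = -j from by linear_combination h)
  have himg : (fun i : ZMod n => w + x - i) '' B = A := by
    ext j
    simp only [Set.mem_image]
    constructor
    · rintro ⟨i, ⟨h1, h2, h3⟩, rfl⟩
      refine ⟨fun h => h2 ?_, fun h => h1 ?_, by rw [hrefl1, hrefl2]; exact h3⟩
      · linear_combination -h
      · linear_combination -h
    · rintro ⟨h1, h2, h3⟩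
      refine ⟨w + x - j, ⟨fun h => h2 ?_, fun h => h1 ?_, ?_⟩, by ring⟩
      · linear_combination -h
      · linear_combination -h
      · rw [hrefl1, hrefl2]; exact h3
  have hABcard : A.ncard = B.ncard := by
    rw [← himg, Set.ncard_image_of_injective _ hinj]
  -- count
  have hcount : S.ncard = A.ncard + B.ncard + 1 := by
    rw [hunion, Set.ncard_union_eq hdABm (Set.toFinite _) (Set.toFinite _),
      Set.ncard_union_eq hdAB (Set.toFinite _) (Set.toFinite _), Set.ncard_singleton]
  obtain ⟨k, hk⟩ := hodd
  constructor <;> omega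
end

section
/- Let n ≥ 3 be an odd integer and define the circular distance d(a, b) between a, b ∈ ZMod n as the minimum of the canonical representatives of a − b and b − a. Then for any two distinct w, x ∈ ZMod n, there is exactly one element m ∈ ZMod n with d(m, w) = d(m, x). -/
lemma min_val_eq (n : ℕ) (hn : 3 ≤ n) (hodd : Odd n) (a b : ZMod n)
    (h : min a.val (-a).val = min b.val (-b).val) : a = b ∨ a = -b := by
  haveI : NeZero n := ⟨by omega⟩
  obtain ⟨k, hk⟩ := hodd
  by_cases ha : a = 0
  · subst ha
    simp only [neg_zero, ZMod.val_zero, Nat.min_self] at h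
    left
    have hb0 : b.val = 0 ∨ (-b).val = 0 := by omega
    have hb : b = 0 := by
      rcases hb0 with h' | h'
      · exact (ZMod.val_eq_zero b).mp h'
      · have := (ZMod.val_eq_zero (-b)).mp h'
        simpa using this
    exact hb.symm
  by_cases hb : b = 0
  · subst hb
    simp [ZMod.neg_val, ha] at h
    have := ZMod.val_lt a
    have ha0 : a.val ≠ 0 := fun hh => ha ((ZMod.val_eq_zero a).mp hh)
    omega
  · rw [ZMod.neg_val, if_neg ha, ZMod.neg_val, if_neg hb] at h
    have hav := ZMod.val_lt a
    have hbv := ZMod.val_lt b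
    have ha0 : a.val ≠ 0 := fun hh => ha ((ZMod.val_eq_zero a).mp hh)
    have hb0 : b.val ≠ 0 := fun hh => hb ((ZMod.val_eq_zero b).mp hh)
    have : a.val = b.val ∨ a.val = n - b.val := by omega
    rcases this with h1 | h1
    · left; exact ZMod.val_injective n h1
    · right
      apply ZMod.val_injective n
      rw [h1, ZMod.neg_val, if_neg hb]

/-- For `n ≥ 3` odd and distinct `w, x ∈ ZMod n`, there is exactly one `m ∈ ZMod n`
equidistant from `w` and `x`. -/
theorem circDist_unique_midpoint (n : ℕ) (hn : 3 ≤ n) (hodd : Odd n)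
    (w x : ZMod n) (hwx : w ≠ x) :
    ∃! m : ZMod n, circDist n m w = circDist n m x := by
  haveI : NeZero n := ⟨by omega⟩
  have hcop : Nat.Coprime 2 n := Nat.coprime_two_left.mpr hodd
  have h2 : IsUnit (2 : ZMod n) := by
    have := (ZMod.isUnit_iff_coprime 2 n).mpr hcop
    simpa using this
  obtain ⟨u, hu⟩ := h2
  refine ⟨(↑u⁻¹ : ZMod n) * (w + x), ?_, ?_⟩
  · have key : (↑u⁻¹ * (w + x) : ZMod n) - w = x - ↑u⁻¹ * (w + x) := by
      have h2m : (2 : ZMod n) * (↑u⁻¹ * (w + x)) = w + x := by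
        rw [← hu, ← mul_assoc, Units.mul_inv, one_mul]
      have := h2m
      rw [two_mul] at this
      linear_combination this
    simp only [circDist]
    rw [key, show w - ↑u⁻¹ * (w + x) = -((↑u⁻¹ * (w + x) : ZMod n) - w) by ring,
      key, show -(x - ↑u⁻¹ * (w + x)) = ↑u⁻¹ * (w + x) - x by ring]
    exact min_comm _ _
  · intro m hm
    simp only [circDist] at hm
    rw [show w - m = -(m - w) by ring, show x - m = -(m - x) by ring] at hm
    rcases min_val_eq n hn hodd (m - w) (m - x) hm with h | h
    · exact absurd (by linear_combination -h : w = x) hwx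
    · have h2m : (2 : ZMod n) * m = w + x := by linear_combination h
      have : (↑u : ZMod n) * m = w + x := by rw [hu]; exact h2m
      calc m = ↑u⁻¹ * (↑u * m) := by rw [← mul_assoc, Units.inv_mul, one_mul]
        _ = ↑u⁻¹ * (w + x) := by rw [this]
end

section
/- Let n ≥ 6 be an integer with n ≡ 2 (mod 4). For a row index i ∈ {1, …, n − 1} and a vertex v ∈ {1, …, n}, define the column index c_i(v) ∈ {1, …, n/2} as follows: if v = n or v = i, then c_i(v) = (n + 2)/4; otherwise, letting j ∈ {1, …, (n − 2)/2} be the circular distance between i and v modulo n − 1 (the unique j with v ≡ i + j or v ≡ i − j mod n − 1), set c_i(v) = j if j ≤ (n − 2)/4 and c_i(v) = j + 1 if j > (n − 2)/4. Then for any two distinct vertices w, x ∈ {1, …, n}: there is exactly one i ∈ {1, …, n − 1} with c_i(w) = c_i(x), and the number of i ∈ {1, …, n − 1} with c_i(w) < c_i(x) equals the number of i with c_i(x) < c_i(w); consequently each of these two counts equals (n − 2)/2. -/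
/-- The circular distance between naturals `a` and `b` modulo `m`: the minimum of the
representatives in `{0, …, m - 1}` of `a - b` and `b - a` taken mod `m`. -/
def circDistNat (m : ℕ) (a b : ℕ) : ℕ :=
  min (((a : ℤ) - b).emod m).toNat (((b : ℤ) - a).emod m).toNat

/-- The column index `c_i(v)`: position of the pair containing vertex `v` in the ordered
row `Y_i` of the 1-factorization of `K_n` (the pair `{i, n}` occupying the middle
position `(n + 2)/4`). -/
def colIndex (n i v : ℕ) : ℕ :=
  if v = n ∨ v = i then (n + 2) / 4
  else if circDistNat (n - 1) i v ≤ (n - 2) / 4 then circDistNat (n - 1) i v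
  else circDistNat (n - 1) i v + 1

lemma cast_emod (A m : ℕ) : ((A:ℤ)).emod m = ((A % m : ℕ) : ℤ) := by
  push_cast
  rfl

lemma mod_small (m a : ℕ) (h : a < 2*m) :
    (a % m = a ∧ a < m) ∨ (a % m = a - m ∧ m ≤ a) := by
  rcases Nat.lt_or_ge a m with h'|h'
  · exact Or.inl ⟨Nat.mod_eq_of_lt h', h'⟩
  · right
    refine ⟨?_, h'⟩
    rw [Nat.mod_eq_sub_mod h', Nat.mod_eq_of_lt (by omega)]

lemma mod_small3 (m a : ℕ) (h : a < 3*m) :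
    (a % m = a ∧ a < m) ∨ (a % m = a - m ∧ m ≤ a ∧ a < 2*m) ∨ (a % m = a - 2*m ∧ 2*m ≤ a) := by
  rcases Nat.lt_or_ge a m with h'|h'
  · exact Or.inl ⟨Nat.mod_eq_of_lt h', h'⟩
  rcases Nat.lt_or_ge a (2*m) with h''|h''
  · exact Or.inr (Or.inl ⟨by rw [Nat.mod_eq_sub_mod h', Nat.mod_eq_of_lt (by omega)], h', h''⟩)
  · refine Or.inr (Or.inr ⟨?_, h''⟩)
    rw [Nat.mod_eq_sub_mod h', Nat.mod_eq_sub_mod (by omega), Nat.mod_eq_of_lt (by omega)]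
    omega

lemma circ_eq_min (m i v : ℕ) (hm : 0 < m) (hi1 : 1 ≤ i) (hi : i ≤ m) (hv1 : 1 ≤ v) (hv : v ≤ m) :
    circDistNat m i v = min ((i + m - v) % m) (m - (i + m - v) % m) := by
  unfold circDistNat
  have emod_eq : ∀ a b : ℤ, a.emod b = a % b := fun _ _ => rfl
  have h1 : ((i:ℤ) - v).emod m = ((i + m - v) % m : ℕ) := by
    have e : ((i:ℤ) - v) = ((i + m - v : ℕ) : ℤ) - m := by push_cast [hv]; ring_nf; omega
    rw [e, emod_eq, Int.sub_emod, Int.emod_self, sub_zero, Int.emod_emod_of_dvd _ dvd_rfl]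
    push_cast; rfl
  have h2 : ((v:ℤ) - i).emod m = ((v + m - i) % m : ℕ) := by
    have e : ((v:ℤ) - i) = ((v + m - i : ℕ) : ℤ) - m := by push_cast [hi]; ring_nf; omega
    rw [e, emod_eq, Int.sub_emod, Int.emod_self, sub_zero, Int.emod_emod_of_dvd _ dvd_rfl]
    push_cast; rfl
  rw [h1, h2, Int.toNat_natCast, Int.toNat_natCast]
  have m1 := mod_small m (i + m - v) (by omega)
  have m2 := mod_small m (v + m - i) (by omega)
  rw [Nat.min_def, Nat.min_def]
  split_ifs <;> omega

/-- abstract column function -/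
def Fc (k d : ℕ) : ℕ := if d = 0 then k + 1 else if d ≤ k then d else d + 1

/-- the distance used, treating vertex n as distance 0 -/
def Dv (k i v : ℕ) : ℕ := if v = 4*k + 2 then 0 else circDistNat (4*k+1) i v

lemma Dv_le (k i v : ℕ) (hk : 1 ≤ k) (hi1 : 1 ≤ i) (hi : i ≤ 4*k+1) (hv1 : 1 ≤ v)
    (hv : v ≤ 4*k+2) : Dv k i v ≤ 2*k := by
  unfold Dv
  split_ifs with h
  · omega
  · rw [circ_eq_min (4*k+1) i v (by omega) hi1 hi hv1 (by omega)]
    have := Nat.mod_lt (i + (4*k+1) - v) (show 0 < 4*k+1 by omega)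
    rw [Nat.min_def]
    split_ifs <;> omega

lemma Dv_eq_zero (k i v : ℕ) (hk : 1 ≤ k) (hi1 : 1 ≤ i) (hi : i ≤ 4*k+1) (hv1 : 1 ≤ v)
    (hv : v ≤ 4*k+2) : Dv k i v = 0 ↔ (v = 4*k+2 ∨ v = i) := by
  unfold Dv
  split_ifs with h
  · simp [h]
  · rw [circ_eq_min (4*k+1) i v (by omega) hi1 hi hv1 (by omega)]
    have h2 := Nat.mod_lt (i + (4*k+1) - v) (show 0 < 4*k+1 by omega)
    constructor
    · intro hmin
      right
      have : (i + (4*k+1) - v) % (4*k+1) = 0 := by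
        rw [Nat.min_def] at hmin; split_ifs at hmin <;> omega
      have m1 := mod_small (4*k+1) (i + (4*k+1) - v) (by omega)
      omega
    · rintro (h'|h')
      · omega
      · subst h'
        have hms : (v + (4*k+1) - v) % (4*k+1) = 0 := by
          have e : v + (4*k+1) - v = 4*k+1 := by omega
          rw [e, Nat.mod_self]
        omega

lemma colIndex_eq (n k i v : ℕ) (hn : n = 4*k+2) (hk : 1 ≤ k)
    (hi1 : 1 ≤ i) (hi2 : i ≤ 4*k+1) (hv1 : 1 ≤ v) (hv2 : v ≤ n) :
    colIndex n i v = Fc k (Dv k i v) := by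
  subst hn
  unfold colIndex Fc
  have hq : (4*k+2+2)/4 = k+1 := by omega
  have hq2 : (4*k+2-2)/4 = k := by omega
  have hm : 4*k+2-1 = 4*k+1 := by omega
  rw [hq, hq2, hm]
  by_cases hvn : v = 4*k+2 ∨ v = i
  · rw [if_pos hvn]
    have : Dv k i v = 0 := by rw [Dv_eq_zero k i v hk hi1 hi2 hv1 hv2]; exact hvn
    rw [this]
    simp
  · rw [if_neg hvn]
    have hd0 : Dv k i v ≠ 0 := by
      rw [Ne, Dv_eq_zero k i v hk hi1 hi2 hv1 hv2]; exact hvn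
    have hde : Dv k i v = circDistNat (4*k+1) i v := by
      unfold Dv; rw [if_neg (by tauto)]
    rw [← hde, if_neg hd0]

lemma Fc_lt_iff (k d d' : ℕ) (hd : d ≤ 2*k) (hd' : d' ≤ 2*k) :
    Fc k d < Fc k d' ↔ (if d = 0 then 2*k+1 else 2*d) < (if d' = 0 then 2*k+1 else 2*d') := by
  unfold Fc; split_ifs <;> omega

lemma Fc_eq_iff (k d d' : ℕ) (hd : d ≤ 2*k) (hd' : d' ≤ 2*k) :
    Fc k d = Fc k d' ↔ d = d' := by
  unfold Fc; split_ifs <;> omega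

lemma shift_card (m w : ℕ) (hm : 0 < m) (hw1 : 1 ≤ w) (hw : w ≤ m)
    (P : ℕ → Prop) [DecidablePred P] (Q : ℕ → Prop) [DecidablePred Q]
    (hPQ : ∀ i, 1 ≤ i → i ≤ m → (P i ↔ Q ((i + m - w) % m))) :
    ((Finset.Icc 1 m).filter P).card = ((Finset.range m).filter Q).card := by
  apply Finset.card_bij' (fun a _ => (a + m - w) % m) (fun b _ => (b + w - 1) % m + 1)
  · intro a ha
    simp only [Finset.mem_filter, Finset.mem_Icc] at ha
    simp only [Finset.mem_filter, Finset.mem_range]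
    exact ⟨Nat.mod_lt _ hm, (hPQ a ha.1.1 ha.1.2).mp ha.2⟩
  · intro b hb
    simp only [Finset.mem_filter, Finset.mem_range] at hb
    simp only [Finset.mem_filter, Finset.mem_Icc]
    have h1 := mod_small m (b + w - 1) (by omega)
    have h2 := mod_small m ((b + w - 1) % m + 1 + m - w) (by omega)
    refine ⟨⟨by omega, by omega⟩, ?_⟩
    rw [hPQ _ (by omega) (by omega)]
    have e : ((b + w - 1) % m + 1 + m - w) % m = b := by omega
    rw [e]
    exact hb.2
  · intro a ha
    simp only [Finset.mem_filter, Finset.mem_Icc] at ha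
    have h1 := mod_small m (a + m - w) (by omega)
    have h2 := mod_small m ((a + m - w) % m + w - 1) (by omega)
    omega
  · intro b hb
    simp only [Finset.mem_filter, Finset.mem_range] at hb
    have h1 := mod_small m (b + w - 1) (by omega)
    have h2 := mod_small m ((b + w - 1) % m + 1 + m - w) (by omega)
    omega

lemma countA (k w : ℕ) (hk : 1 ≤ k) (hw1 : 1 ≤ w) (hw : w ≤ 4*k+1)
    (lo hi : ℕ) :
    ((Finset.Icc 1 (4*k+1)).filter (fun i => lo ≤ Dv k i w ∧ Dv k i w ≤ hi)).card =
      ((Finset.range (4*k+1)).filter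
        (fun j => lo ≤ min j (4*k+1 - j) ∧ min j (4*k+1 - j) ≤ hi)).card := by
  apply shift_card (4*k+1) w (by omega) hw1 hw
  intro i hi1 hi2
  unfold Dv
  rw [if_neg (by omega), circ_eq_min _ _ _ (by omega) hi1 hi2 hw1 hw]

lemma countA_lt (k w : ℕ) (hk : 1 ≤ k) (hw1 : 1 ≤ w) (hw : w ≤ 4*k+1) :
    ((Finset.Icc 1 (4*k+1)).filter (fun i => 1 ≤ Dv k i w ∧ Dv k i w ≤ k)).card = 2*k := by
  rw [countA k w hk hw1 hw 1 k]
  have e : (Finset.range (4*k+1)).filter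
        (fun j => 1 ≤ min j (4*k+1 - j) ∧ min j (4*k+1 - j) ≤ k) =
      Finset.Icc 1 k ∪ Finset.Icc (3*k+1) (4*k) := by
    ext j
    simp only [Finset.mem_filter, Finset.mem_range, Finset.mem_union, Finset.mem_Icc,
      Nat.min_def]
    split_ifs <;> omega
  rw [e, Finset.card_union_of_disjoint, Nat.card_Icc, Nat.card_Icc]
  · omega
  · rw [Finset.disjoint_left]
    intro a ha ha'
    simp only [Finset.mem_Icc] at ha ha'
    omega

lemma countA_gt (k w : ℕ) (hk : 1 ≤ k) (hw1 : 1 ≤ w) (hw : w ≤ 4*k+1) :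
    ((Finset.Icc 1 (4*k+1)).filter (fun i => k+1 ≤ Dv k i w ∧ Dv k i w ≤ 2*k)).card = 2*k := by
  rw [countA k w hk hw1 hw (k+1) (2*k)]
  have e : (Finset.range (4*k+1)).filter
        (fun j => k+1 ≤ min j (4*k+1 - j) ∧ min j (4*k+1 - j) ≤ 2*k) =
      Finset.Icc (k+1) (3*k) := by
    ext j
    simp only [Finset.mem_filter, Finset.mem_range, Finset.mem_Icc, Nat.min_def]
    split_ifs <;> omega
  rw [e, Nat.card_Icc]
  omega

lemma main_auxA (k w : ℕ) (hk : 1 ≤ k) (hw1 : 1 ≤ w) (hw : w ≤ 4*k+1) :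
    (∃! i : ℕ, i ∈ Finset.Icc 1 (4*k+1) ∧
        colIndex (4*k+2) i w = colIndex (4*k+2) i (4*k+2)) ∧
    ((Finset.Icc 1 (4*k+1)).filter
        (fun i => colIndex (4*k+2) i w < colIndex (4*k+2) i (4*k+2))).card = 2*k ∧
    ((Finset.Icc 1 (4*k+1)).filter
        (fun i => colIndex (4*k+2) i (4*k+2) < colIndex (4*k+2) i w)).card = 2*k := by
  have hDn : ∀ i, Dv k i (4*k+2) = 0 := by intro i; unfold Dv; simp
  have hcol : ∀ i v, 1 ≤ i → i ≤ 4*k+1 → 1 ≤ v → v ≤ 4*k+2 →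
      colIndex (4*k+2) i v = Fc k (Dv k i v) := fun i v a b c d =>
    colIndex_eq (4*k+2) k i v rfl hk a b c d
  have hFn : Fc k 0 = k + 1 := by unfold Fc; simp
  refine ⟨⟨w, ⟨Finset.mem_Icc.mpr ⟨hw1, hw⟩, ?_⟩, ?_⟩, ?_, ?_⟩
  · rw [hcol w w hw1 hw hw1 (by omega), hcol w (4*k+2) hw1 hw (by omega) le_rfl, hDn]
    congr 1
    rw [Dv_eq_zero k w w hk hw1 hw hw1 (by omega)]
    right; rfl
  · rintro y ⟨hy, he⟩
    rw [Finset.mem_Icc] at hy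
    rw [hcol y w hy.1 hy.2 hw1 (by omega), hcol y (4*k+2) hy.1 hy.2 (by omega) le_rfl,
      hDn, Fc_eq_iff k _ _ (Dv_le k y w hk hy.1 hy.2 hw1 (by omega)) (by omega),
      Dv_eq_zero k y w hk hy.1 hy.2 hw1 (by omega)] at he
    omega
  · rw [Finset.filter_congr (q := fun i => 1 ≤ Dv k i w ∧ Dv k i w ≤ k) ?_]
    · exact countA_lt k w hk hw1 hw
    · intro i hi
      rw [Finset.mem_Icc] at hi
      have hb := Dv_le k i w hk hi.1 hi.2 hw1 (by omega)
      rw [hcol i w hi.1 hi.2 hw1 (by omega), hcol i (4*k+2) hi.1 hi.2 (by omega) le_rfl,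
        hDn, Fc_lt_iff k _ _ hb (by omega)]
      split_ifs <;> omega
  · rw [Finset.filter_congr (q := fun i => k+1 ≤ Dv k i w ∧ Dv k i w ≤ 2*k) ?_]
    · exact countA_gt k w hk hw1 hw
    · intro i hi
      rw [Finset.mem_Icc] at hi
      have hb := Dv_le k i w hk hi.1 hi.2 hw1 (by omega)
      rw [hcol i w hi.1 hi.2 hw1 (by omega), hcol i (4*k+2) hi.1 hi.2 (by omega) le_rfl,
        hDn, Fc_lt_iff k _ _ (by omega) hb]
      split_ifs <;> omega

lemma min_flip (m J J' : ℕ) (hJ : J < m) (hJ' : J' < m)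
    (h : J + J' = m ∨ (J = 0 ∧ J' = 0)) :
    min J' (m - J') = min J (m - J) := by
  rw [Nat.min_def, Nat.min_def]
  split_ifs <;> omega

lemma min_eq_iff_key (m w x i : ℕ) (hm : 0 < m) (hw1 : 1 ≤ w) (hw : w ≤ m)
    (hx1 : 1 ≤ x) (hx : x ≤ m) (hi1 : 1 ≤ i) (hi : i ≤ m) (hwx : w ≠ x) :
    min ((i + m - w) % m) (m - (i + m - w) % m) =
      min ((i + m - x) % m) (m - (i + m - x) % m) ↔
    (i + m - w) % m + (i + m - x) % m = m := by
  have m1 := mod_small m (i + m - w) (by omega)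
  have m2 := mod_small m (i + m - x) (by omega)
  rw [Nat.min_def, Nat.min_def]
  split_ifs <;> omega

lemma exists_eq_row (m w x : ℕ) (hm : 0 < m) (hm2 : m % 2 = 1) (hw1 : 1 ≤ w) (hw : w ≤ m)
    (hx1 : 1 ≤ x) (hx : x ≤ m) (hwx : w ≠ x) :
    ∃ i₀, (1 ≤ i₀ ∧ i₀ ≤ m) ∧ (i₀ + m - w) % m + (i₀ + m - x) % m = m := by
  have hsm := mod_small m (w + x) (by omega)
  set s := (w + x) % m with hs
  by_cases h0 : s = 0
  · refine ⟨m, ⟨by omega, le_rfl⟩, ?_⟩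
    have m1 := mod_small m (m + m - w) (by omega)
    have m2 := mod_small m (m + m - x) (by omega)
    omega
  by_cases h2 : s % 2 = 0
  · refine ⟨s/2, ⟨by omega, by omega⟩, ?_⟩
    have m1 := mod_small m (s/2 + m - w) (by omega)
    have m2 := mod_small m (s/2 + m - x) (by omega)
    omega
  · refine ⟨(s + m)/2, ⟨by omega, by omega⟩, ?_⟩
    have m1 := mod_small m ((s + m)/2 + m - w) (by omega)
    have m2 := mod_small m ((s + m)/2 + m - x) (by omega)
    omega

lemma uniq_eq_row (m w x y z : ℕ) (hm : 0 < m) (hm2 : m % 2 = 1)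
    (hw1 : 1 ≤ w) (hw : w ≤ m) (hx1 : 1 ≤ x) (hx : x ≤ m)
    (hy1 : 1 ≤ y) (hy : y ≤ m) (hz1 : 1 ≤ z) (hz : z ≤ m)
    (hky : (y + m - w) % m + (y + m - x) % m = m)
    (hkz : (z + m - w) % m + (z + m - x) % m = m) : y = z := by
  have m1 := mod_small m (y + m - w) (by omega)
  have m2 := mod_small m (y + m - x) (by omega)
  have m3 := mod_small m (z + m - w) (by omega)
  have m4 := mod_small m (z + m - x) (by omega)
  omega

lemma refl_mem (m t i : ℕ) (hm : 0 < m) : 1 ≤ (t + m - 1 - i) % m + 1 ∧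
    (t + m - 1 - i) % m + 1 ≤ m := by
  have := Nat.mod_lt (t + m - 1 - i) hm
  omega

lemma refl_invol (m t i : ℕ) (hm : 0 < m) (ht1 : 2 ≤ t) (ht : t ≤ 2*m - 1)
    (hi1 : 1 ≤ i) (hi : i ≤ m) :
    (t + m - 1 - ((t + m - 1 - i) % m + 1)) % m + 1 = i := by
  have m1 := mod_small3 m (t + m - 1 - i) (by omega)
  have m2 := mod_small3 m (t + m - 1 - ((t + m - 1 - i) % m + 1)) (by omega)
  omega

lemma refl_key (m t u v i : ℕ) (hm : 0 < m) (htuv : t = u + v)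
    (hu1 : 1 ≤ u) (hu : u ≤ m) (hv1 : 1 ≤ v) (hv : v ≤ m) (hi1 : 1 ≤ i) (hi : i ≤ m) :
    ((t + m - 1 - i) % m + 1 + m - u) % m + (i + m - v) % m = m ∨
    (((t + m - 1 - i) % m + 1 + m - u) % m = 0 ∧ (i + m - v) % m = 0) := by
  have m0 := mod_small3 m (t + m - 1 - i) (by omega)
  have m1 := mod_small m ((t + m - 1 - i) % m + 1 + m - u) (by omega)
  have m2 := mod_small m (i + m - v) (by omega)
  omega

lemma main_auxB (k w x : ℕ) (hk : 1 ≤ k) (hw1 : 1 ≤ w) (hw : w ≤ 4*k+1)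
    (hx1 : 1 ≤ x) (hx : x ≤ 4*k+1) (hwx : w ≠ x) :
    (∃! i : ℕ, i ∈ Finset.Icc 1 (4*k+1) ∧
        colIndex (4*k+2) i w = colIndex (4*k+2) i x) ∧
    ((Finset.Icc 1 (4*k+1)).filter
        (fun i => colIndex (4*k+2) i w < colIndex (4*k+2) i x)).card =
      ((Finset.Icc 1 (4*k+1)).filter
        (fun i => colIndex (4*k+2) i x < colIndex (4*k+2) i w)).card ∧
    ((Finset.Icc 1 (4*k+1)).filter
        (fun i => colIndex (4*k+2) i w < colIndex (4*k+2) i x)).card = 2*k := by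
  have hcol : ∀ i v, 1 ≤ i → i ≤ 4*k+1 → 1 ≤ v → v ≤ 4*k+2 →
      colIndex (4*k+2) i v = Fc k (Dv k i v) := fun i v a b c d =>
    colIndex_eq (4*k+2) k i v rfl hk a b c d
  have hDvmin : ∀ i v, 1 ≤ i → i ≤ 4*k+1 → 1 ≤ v → v ≤ 4*k+1 →
      Dv k i v = min ((i + (4*k+1) - v) % (4*k+1))
        (4*k+1 - (i + (4*k+1) - v) % (4*k+1)) := by
    intro i v a b c d
    unfold Dv
    rw [if_neg (by omega), circ_eq_min _ _ _ (by omega) a b c d]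
  -- equality characterization in terms of colIndex
  have hceq : ∀ i, 1 ≤ i → i ≤ 4*k+1 →
      (colIndex (4*k+2) i w = colIndex (4*k+2) i x ↔
        (i + (4*k+1) - w) % (4*k+1) + (i + (4*k+1) - x) % (4*k+1) = 4*k+1) := by
    intro i a b
    rw [hcol i w a b hw1 (by omega), hcol i x a b hx1 (by omega),
      Fc_eq_iff k _ _ (Dv_le k i w hk a b hw1 (by omega))
        (Dv_le k i x hk a b hx1 (by omega)),
      hDvmin i w a b hw1 hw, hDvmin i x a b hx1 hx]
    exact min_eq_iff_key (4*k+1) w x i (by omega) hw1 hw hx1 hx a b hwx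
  -- the unique equality row
  obtain ⟨i₀, hi₀1, hi₀eq⟩ := exists_eq_row (4*k+1) w x (by omega) (by omega)
    hw1 hw hx1 hx hwx
  -- the reflection involution
  obtain ⟨r, hrdef⟩ : ∃ r : ℕ → ℕ, ∀ i,
      r i = (w + x + (4*k+1) - 1 - i) % (4*k+1) + 1 :=
    ⟨fun i => (w + x + (4*k+1) - 1 - i) % (4*k+1) + 1, fun _ => rfl⟩
  have hrmem : ∀ i, 1 ≤ r i ∧ r i ≤ 4*k+1 := by
    intro i
    rw [hrdef]
    exact refl_mem (4*k+1) (w+x) i (by omega)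
  have hrr : ∀ i, 1 ≤ i → i ≤ 4*k+1 → r (r i) = i := by
    intro i a b
    rw [hrdef, hrdef]
    exact refl_invol (4*k+1) (w+x) i (by omega) (by omega) (by omega) a b
  have hrswap : ∀ i, 1 ≤ i → i ≤ 4*k+1 →
      Dv k (r i) w = Dv k i x ∧ Dv k (r i) x = Dv k i w := by
    intro i a b
    obtain ⟨c, d⟩ := hrmem i
    constructor
    · rw [hDvmin (r i) w c d hw1 hw, hDvmin i x a b hx1 hx, hrdef]
      refine min_flip (4*k+1) _ _ (Nat.mod_lt _ (by omega)) (Nat.mod_lt _ (by omega)) ?_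
      have := refl_key (4*k+1) (w+x) w x i (by omega) rfl hw1 hw hx1 hx a b
      omega
    · rw [hDvmin (r i) x c d hx1 hx, hDvmin i w a b hw1 hw, hrdef]
      refine min_flip (4*k+1) _ _ (Nat.mod_lt _ (by omega)) (Nat.mod_lt _ (by omega)) ?_
      have := refl_key (4*k+1) (w+x) x w i (by omega) (by omega) hx1 hx hw1 hw a b
      omega
  have hflip : ∀ i, 1 ≤ i → i ≤ 4*k+1 →
      (colIndex (4*k+2) i w < colIndex (4*k+2) i x ↔
        colIndex (4*k+2) (r i) x < colIndex (4*k+2) (r i) w) := by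
    intro i a b
    obtain ⟨c, d⟩ := hrmem i
    obtain ⟨e1, e2⟩ := hrswap i a b
    rw [hcol i w a b hw1 (by omega), hcol i x a b hx1 (by omega),
      hcol (r i) w c d hw1 (by omega), hcol (r i) x c d hx1 (by omega), e1, e2]
  have hcard : ((Finset.Icc 1 (4*k+1)).filter
        (fun i => colIndex (4*k+2) i w < colIndex (4*k+2) i x)).card =
      ((Finset.Icc 1 (4*k+1)).filter
        (fun i => colIndex (4*k+2) i x < colIndex (4*k+2) i w)).card := by
    apply Finset.card_bij' (fun a _ => r a) (fun b _ => r b)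
    · intro a ha
      simp only [Finset.mem_filter, Finset.mem_Icc] at ha ⊢
      obtain ⟨⟨a1, a2⟩, a3⟩ := ha
      obtain ⟨c, d⟩ := hrmem a
      exact ⟨⟨c, d⟩, (hflip a a1 a2).mp a3⟩
    · intro b hb
      simp only [Finset.mem_filter, Finset.mem_Icc] at hb ⊢
      obtain ⟨⟨b1, b2⟩, b3⟩ := hb
      obtain ⟨c, d⟩ := hrmem b
      refine ⟨⟨c, d⟩, ?_⟩
      rw [hflip (r b) c d, hrr b b1 b2]
      exact b3
    · intro a ha
      simp only [Finset.mem_filter, Finset.mem_Icc] at ha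
      exact hrr a ha.1.1 ha.1.2
    · intro b hb
      simp only [Finset.mem_filter, Finset.mem_Icc] at hb
      exact hrr b hb.1.1 hb.1.2
  refine ⟨⟨i₀, ⟨Finset.mem_Icc.mpr ⟨hi₀1.1, hi₀1.2⟩, (hceq i₀ hi₀1.1 hi₀1.2).mpr hi₀eq⟩,
      ?_⟩, hcard, ?_⟩
  · rintro y ⟨hy, he⟩
    rw [Finset.mem_Icc] at hy
    exact uniq_eq_row (4*k+1) w x y i₀ (by omega) (by omega) hw1 hw hx1 hx
      hy.1 hy.2 hi₀1.1 hi₀1.2 ((hceq y hy.1 hy.2).mp he) hi₀eq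
  · have heqf : (Finset.Icc 1 (4*k+1)).filter
        (fun i => colIndex (4*k+2) i w = colIndex (4*k+2) i x) = {i₀} := by
      apply Finset.eq_singleton_iff_unique_mem.mpr
      constructor
      · simp only [Finset.mem_filter, Finset.mem_Icc]
        exact ⟨⟨hi₀1.1, hi₀1.2⟩, (hceq i₀ hi₀1.1 hi₀1.2).mpr hi₀eq⟩
      · intro y hy
        simp only [Finset.mem_filter, Finset.mem_Icc] at hy
        exact uniq_eq_row (4*k+1) w x y i₀ (by omega) (by omega) hw1 hw hx1 hx
          hy.1.1 hy.1.2 hi₀1.1 hi₀1.2 ((hceq y hy.1.1 hy.1.2).mp hy.2) hi₀eq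
    have hsplit := Finset.card_filter_add_card_filter_not
      (s := Finset.Icc 1 (4*k+1))
      (fun i => colIndex (4*k+2) i w < colIndex (4*k+2) i x)
    have hneg : (Finset.Icc 1 (4*k+1)).filter
        (fun i => ¬ colIndex (4*k+2) i w < colIndex (4*k+2) i x) =
        ((Finset.Icc 1 (4*k+1)).filter
          (fun i => colIndex (4*k+2) i x < colIndex (4*k+2) i w)) ∪
        ((Finset.Icc 1 (4*k+1)).filter
          (fun i => colIndex (4*k+2) i w = colIndex (4*k+2) i x)) := by
      rw [← Finset.filter_or]
      apply Finset.filter_congr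
      intro y _
      constructor
      · intro h; omega
      · intro h; omega
    have hdisj : Disjoint
        ((Finset.Icc 1 (4*k+1)).filter
          (fun i => colIndex (4*k+2) i x < colIndex (4*k+2) i w))
        ((Finset.Icc 1 (4*k+1)).filter
          (fun i => colIndex (4*k+2) i w = colIndex (4*k+2) i x)) := by
      rw [Finset.disjoint_left]
      intro a ha ha'
      simp only [Finset.mem_filter] at ha ha'
      omega
    rw [hneg, Finset.card_union_of_disjoint hdisj, heqf] at hsplit
    simp only [Finset.card_singleton, Nat.card_Icc] at hsplit
    omega

/-- For `n ≥ 6` with `n ≡ 2 (mod 4)` and distinct vertices `w, x ∈ {1, …, n}`: exactly one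
row `i ∈ {1, …, n - 1}` has `c_i(w) = c_i(x)`; the number of rows with `c_i(w) < c_i(x)`
equals the number with `c_i(x) < c_i(w)`, and each of these counts equals `(n - 2)/2`. -/
theorem colIndex_balance (n : ℕ) (hn : 6 ≤ n) (hmod : n % 4 = 2)
    (w x : ℕ) (hw1 : 1 ≤ w) (hw2 : w ≤ n) (hx1 : 1 ≤ x) (hx2 : x ≤ n) (hwx : w ≠ x) :
    (∃! i : ℕ, i ∈ Finset.Icc 1 (n - 1) ∧ colIndex n i w = colIndex n i x) ∧
    ((Finset.Icc 1 (n - 1)).filter (fun i => colIndex n i w < colIndex n i x)).card =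
      ((Finset.Icc 1 (n - 1)).filter (fun i => colIndex n i x < colIndex n i w)).card ∧
    ((Finset.Icc 1 (n - 1)).filter (fun i => colIndex n i w < colIndex n i x)).card =
      (n - 2) / 2 := by
  obtain ⟨k, hk, hn4⟩ : ∃ k, 1 ≤ k ∧ n = 4*k+2 := ⟨n/4, by omega, by omega⟩
  subst hn4
  have hm1 : 4*k+2-1 = 4*k+1 := by omega
  have hm2 : (4*k+2-2)/2 = 2*k := by omega
  rw [hm1, hm2]
  rcases eq_or_ne x (4*k+2) with hxn | hxn
  · subst hxn
    obtain ⟨h1, h2, h3⟩ := main_auxA k w hk hw1 (by omega)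
    exact ⟨h1, by rw [h2, h3], h2⟩
  rcases eq_or_ne w (4*k+2) with hwn | hwn
  · subst hwn
    obtain ⟨⟨i₀, ⟨hi₀m, hi₀e⟩, hu⟩, hB, hC⟩ := main_auxA k x hk hx1 (by omega)
    refine ⟨⟨i₀, ⟨hi₀m, hi₀e.symm⟩, fun y hy => hu y ⟨hy.1, hy.2.symm⟩⟩, ?_, ?_⟩
    · rw [hB, hC]
    · exact hC
  · exact main_auxB k w x hk hw1 (by omega) hx1 (by omega) hwx
end
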